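/- arXiv:math/0611860 — 3 statements merged into one kernel-verified Lean document; each statement's English description precedes it below -/
import Mathlib

section
/- For every α ∈ [0,1], ν_α({0}) = 0 and the pushforward of ν_α under the map x ↦ 1/x (defined on (0,∞)) equals ν_{1−α}. Equivalently, for every Stern-Brocot interval [a,b] ⊆ (0,∞], ν_α([a,b] ∩ (0,∞)) = ν_{1−α}([1/b, 1/a]). -/
open MeasureTheory Filter Set Topology

noncomputable section

/-- Endpoints (as pairs of nonnegative integers, `(a,b)` representing `a/b`, with `1/0 = ∞`)
of the Stern-Brocot interval obtained from `[0/1, 1/0]` by following the list of choices `w`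
(`true` = left sub-interval, `false` = right sub-interval). -/
def sbGo : (ℕ × ℕ) × (ℕ × ℕ) → List Bool → (ℕ × ℕ) × (ℕ × ℕ)
  | I, [] => I
  | ((a, b), (c, d)), (lft :: w) =>
      if lft then sbGo ((a, b), (a + c, b + d)) w else sbGo ((a + c, b + d), (c, d)) w

/-- The Stern-Brocot interval of rank `w.length` indexed by the list of choices `w`. -/
def sb (w : List Bool) : (ℕ × ℕ) × (ℕ × ℕ) := sbGo ((0, 1), (1, 0)) w

/-- The intersection of a Stern-Brocot interval with `[0, ∞)`, as a subset of `ℝ`. -/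
def sbSet : (ℕ × ℕ) × (ℕ × ℕ) → Set ℝ
  | ((a, b), (c, d)) =>
      if d = 0 then Set.Ici ((a : ℝ) / (b : ℝ))
      else Set.Icc ((a : ℝ) / (b : ℝ)) ((c : ℝ) / (d : ℝ))

/-- `ν` is the measure `ν_α`: a Borel probability measure on `[0,∞)` (viewed as a measure on `ℝ`
giving no mass to `(-∞,0)`) with `ν([0,1]) = 1 - α`, `ν([1,∞)) = α`, and such that for every
Stern-Brocot interval `I` of rank `r ≥ 1`, the left sub-interval of `I` carries a proportion `α`
of the mass of `I` if `r` is odd and `1 - α` if `r` is even. -/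
def IsSternBrocotMeasure (α : ℝ) (ν : Measure ℝ) : Prop :=
  IsProbabilityMeasure ν ∧
  ν (Set.Iio 0) = 0 ∧
  ν (Set.Icc 0 1) = ENNReal.ofReal (1 - α) ∧
  ν (Set.Ici 1) = ENNReal.ofReal α ∧
  ∀ w : List Bool, 1 ≤ w.length →
    ν (sbSet (sb (w ++ [true]))) =
      (if Odd w.length then ENNReal.ofReal α else ENNReal.ofReal (1 - α)) * ν (sbSet (sb w))

namespace SBaux

def Good (I : (ℕ × ℕ) × ℕ × ℕ) : Prop :=
  I.1.2 * I.2.1 = I.1.1 * I.2.2 + 1 ∧ 1 ≤ I.1.2 ∧ 1 ≤ I.2.1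

lemma good_sbGo {I} (h : Good I) (w : List Bool) : Good (sbGo I w) := by
  induction w generalizing I with
  | nil => exact h
  | cons lft w ih =>
    obtain ⟨⟨a, b⟩, c, d⟩ := I
    obtain ⟨h1, h2, h3⟩ := h
    dsimp only [Good] at h1 h2 h3
    cases lft
    · simp only [sbGo, if_neg Bool.false_ne_true]
      refine ih ⟨?_, ?_, ?_⟩ <;> dsimp only [Good]
      · nlinarith
      · omega
      · exact h3
    · simp only [sbGo, if_pos rfl]
      refine ih ⟨?_, ?_, ?_⟩ <;> dsimp only [Good]
      · nlinarith
      · exact h2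
      · omega

lemma good_sb (w : List Bool) : Good (sb w) := good_sbGo ⟨by norm_num, le_refl 1, le_refl 1⟩ w

lemma sbGo_append (I) (u v : List Bool) : sbGo I (u ++ v) = sbGo (sbGo I u) v := by
  induction u generalizing I with
  | nil => rfl
  | cons lft u ih =>
    obtain ⟨⟨a, b⟩, c, d⟩ := I
    cases lft <;> simp only [List.cons_append, sbGo, if_pos, if_neg Bool.false_ne_true] <;>
      exact ih _

lemma sb_append (u v : List Bool) : sb (u ++ v) = sbGo (sb u) v := sbGo_append _ u v

def τ (I : (ℕ × ℕ) × ℕ × ℕ) : (ℕ × ℕ) × ℕ × ℕ := ((I.2.2, I.2.1), (I.1.2, I.1.1))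

lemma sbGo_map_not (I) (w : List Bool) : sbGo (τ I) (w.map not) = τ (sbGo I w) := by
  induction w generalizing I with
  | nil => rfl
  | cons lft w ih =>
    obtain ⟨⟨a, b⟩, c, d⟩ := I
    cases lft
    · simp only [List.map_cons, Bool.not_false, sbGo, if_pos, if_neg Bool.false_ne_true]
      rw [← ih ((a + c, b + d), c, d)]
      have he : τ ((a + c, b + d), c, d) = ((d, c), d + b, c + a) := by
        simp [τ, Nat.add_comm]
      rw [he]
      rfl
    · simp only [List.map_cons, Bool.not_true, sbGo, if_pos, if_neg Bool.false_ne_true]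
      rw [← ih ((a, b), a + c, b + d)]
      have he : τ ((a, b), a + c, b + d) = ((d + b, c + a), b, a) := by
        simp [τ, Nat.add_comm]
      rw [he]
      rfl

lemma sb_map_not (w : List Bool) : sb (w.map not) = τ (sb w) := sbGo_map_not ((0, 1), (1, 0)) w

lemma fst_sbGo_replicate_true (I) (n : ℕ) : (sbGo I (List.replicate n true)).1 = I.1 := by
  induction n generalizing I with
  | zero => rfl
  | succ n ih =>
    obtain ⟨⟨a, b⟩, c, d⟩ := I
    simp only [List.replicate_succ, sbGo, if_pos]
    exact ih _

end SBaux

section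
lemma div_le_div_nat {a b c d : ℕ} (hb : 1 ≤ b) (hd : 1 ≤ d) (h : a * d ≤ b * c) :
    (a : ℝ) / b ≤ (c : ℝ) / d := by
  rw [div_le_div_iff₀ (by exact_mod_cast hb : (0:ℝ) < b) (by exact_mod_cast hd : (0:ℝ) < d)]
  exact_mod_cast (by nlinarith : a * d ≤ c * b)

lemma mem_sbSet_lep {I : (ℕ × ℕ) × ℕ × ℕ} (hG : SBaux.Good I) :
    (I.1.1 : ℝ) / (I.1.2 : ℝ) ∈ sbSet I := by
  obtain ⟨⟨a, b⟩, c, d⟩ := I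
  obtain ⟨h1, h2, h3⟩ := hG
  dsimp only [SBaux.Good] at h1 h2 h3 ⊢
  by_cases hd : d = 0
  · simp [sbSet, hd]
  · simp only [sbSet, if_neg hd]
    exact ⟨le_refl _, div_le_div_nat h2 (Nat.one_le_iff_ne_zero.mpr hd) (by omega)⟩
end

namespace SBaux2
open SBaux

variable {β : ℝ} {μ : MeasureTheory.Measure ℝ}

lemma prob (hμ : IsSternBrocotMeasure β μ) : MeasureTheory.IsProbabilityMeasure μ := hμ.1

lemma mIci0 (hμ : IsSternBrocotMeasure β μ) : μ (Set.Ici (0:ℝ)) = 1 := by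
  haveI := hμ.1
  rw [← Set.compl_Iio, measure_compl measurableSet_Iio (measure_ne_top μ _), hμ.2.1,
    measure_univ, tsub_zero]

lemma mass_true_true (hβ0 : 0 ≤ β) (hβ1 : β ≤ 1) (hμ : IsSternBrocotMeasure β μ)
    (v : List Bool) (hv : 1 ≤ v.length) :
    μ (sbSet (sb (v ++ [true, true]))) = ENNReal.ofReal (β * (1 - β)) * μ (sbSet (sb v)) := by
  have h1 := hμ.2.2.2.2 (v ++ [true]) (by simp)
  have h2 := hμ.2.2.2.2 v hv
  have e : v ++ [true, true] = (v ++ [true]) ++ [true] := by simp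
  rw [e, h1, h2, ← mul_assoc]
  simp only [List.length_append, List.length_singleton]
  congr 1
  rcases Nat.even_or_odd v.length with h | h
  · rw [if_pos (by simpa using h.add_one), if_neg (by simpa [Nat.not_odd_iff_even] using h),
      ← ENNReal.ofReal_mul hβ0]
  · rw [if_neg (by simpa [Nat.not_odd_iff_even] using h.add_one), if_pos h,
      ← ENNReal.ofReal_mul (by linarith : (0:ℝ) ≤ 1 - β), mul_comm (1 - β) β]

lemma chain (hβ0 : 0 ≤ β) (hβ1 : β ≤ 1) (hμ : IsSternBrocotMeasure β μ)
    (v : List Bool) (hv : 1 ≤ v.length) (k : ℕ) :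
    μ (sbSet (sb (v ++ List.replicate (2 * k) true))) ≤ ENNReal.ofReal (β * (1 - β)) ^ k := by
  haveI := hμ.1
  induction k with
  | zero => simpa using MeasureTheory.prob_le_one
  | succ k ih =>
    have e : v ++ List.replicate (2 * (k + 1)) true
        = (v ++ List.replicate (2 * k) true) ++ [true, true] := by
      rw [List.append_assoc]
      congr 1
      rw [show 2 * (k + 1) = 2 * k + 2 by ring, List.replicate_add]
      rfl
    rw [e, mass_true_true hβ0 hβ1 hμ _ (by simp; omega)]
    calc ENNReal.ofReal (β * (1 - β)) * μ (sbSet (sb (v ++ List.replicate (2 * k) true)))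
        ≤ ENNReal.ofReal (β * (1 - β)) * ENNReal.ofReal (β * (1 - β)) ^ k :=
          mul_le_mul_right ih _
      _ = ENNReal.ofReal (β * (1 - β)) ^ (k + 1) := by rw [pow_succ, mul_comm]

lemma atom (hβ0 : 0 ≤ β) (hβ1 : β ≤ 1) (hμ : IsSternBrocotMeasure β μ)
    (v : List Bool) (hv : 1 ≤ v.length) {x : ℝ}
    (hx : ∀ k, x ∈ sbSet (sb (v ++ List.replicate (2 * k) true))) : μ {x} = 0 := by
  have hb : ∀ k, μ {x} ≤ ENNReal.ofReal (β * (1 - β)) ^ k := fun k =>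
    le_trans (measure_mono (Set.singleton_subset_iff.mpr (hx k))) (chain hβ0 hβ1 hμ v hv k)
  have hlt : ENNReal.ofReal (β * (1 - β)) < 1 := by
    rw [ENNReal.ofReal_lt_one]; nlinarith
  have ht := ENNReal.tendsto_pow_atTop_nhds_zero_of_lt_one hlt
  exact le_antisymm (ge_of_tendsto ht (Filter.Eventually.of_forall hb)) (zero_le)

lemma atom_lep (hβ0 : 0 ≤ β) (hβ1 : β ≤ 1) (hμ : IsSternBrocotMeasure β μ)
    (v : List Bool) (hv : 1 ≤ v.length) :
    μ {((sb v).1.1 : ℝ) / ((sb v).1.2 : ℝ)} = 0 := by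
  apply atom hβ0 hβ1 hμ v hv
  intro k
  have h1 : (sb (v ++ List.replicate (2 * k) true)).1 = (sb v).1 := by
    rw [sb_append]; exact fst_sbGo_replicate_true _ _
  rw [← h1]
  exact mem_sbSet_lep (good_sb _)

end SBaux2

section
lemma Ici_diff_Ico' {L M : ℝ} (h : L ≤ M) : Set.Ici L \ Set.Ico L M = Set.Ici M := by
  ext x
  simp only [Set.mem_diff, Set.mem_Ici, Set.mem_Ico, not_and, not_lt]
  constructor
  · rintro ⟨h1, h2⟩; exact h2 h1
  · intro h1; exact ⟨le_trans h h1, fun _ => h1⟩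

lemma Icc_diff_Ico' {L M R : ℝ} (hLM : L ≤ M) : Set.Icc L R \ Set.Ico L M = Set.Icc M R := by
  ext x
  simp only [Set.mem_diff, Set.mem_Icc, Set.mem_Ico, not_and, not_lt]
  constructor
  · rintro ⟨⟨h1, h2⟩, h3⟩; exact ⟨h3 h1, h2⟩
  · rintro ⟨h1, h2⟩; exact ⟨⟨le_trans hLM h1, h2⟩, fun _ => h1⟩
end

namespace SBaux2
open SBaux

variable {β : ℝ} {μ : MeasureTheory.Measure ℝ}

lemma mass_false (hβ0 : 0 ≤ β) (hβ1 : β ≤ 1) (hμ : IsSternBrocotMeasure β μ)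
    (v : List Bool) (hv : 1 ≤ v.length) :
    μ (sbSet (sb (v ++ [false]))) =
      (if Odd v.length then ENNReal.ofReal (1 - β) else ENNReal.ofReal β) * μ (sbSet (sb v)) := by
  haveI := hμ.1
  rcases hsb : sb v with ⟨⟨a, b⟩, c, d⟩
  have hG := good_sb v
  rw [hsb] at hG
  obtain ⟨h1, h2, h3⟩ := hG
  dsimp only [Good] at h1 h2 h3
  have hbd : b + d ≠ 0 := by omega
  have hT : sb (v ++ [true]) = ((a, b), (a + c, b + d)) := by
    rw [sb_append, hsb]; rfl
  have hF : sb (v ++ [false]) = ((a + c, b + d), (c, d)) := by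
    rw [sb_append, hsb]; rfl
  set L : ℝ := (a : ℝ) / (b : ℝ) with hL
  set M : ℝ := ((a + c : ℕ) : ℝ) / ((b + d : ℕ) : ℝ) with hM
  have hLM : L ≤ M := div_le_div_nat h2 (by omega) (by nlinarith)
  -- atom at M
  have hMa : μ {M} = 0 := by
    have := atom_lep hβ0 hβ1 hμ (v ++ [false]) (by simp)
    rw [hF] at this
    exact this
  -- left child set
  have hTS : sbSet (sb (v ++ [true])) = Set.Icc L M := by
    rw [hT]; simp only [sbSet, if_neg hbd]; rfl
  -- measure of Ico L M
  have hIco : μ (Set.Ico L M) = μ (sbSet (sb (v ++ [true]))) := by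
    rw [hTS, ← Set.Icc_sdiff_right, measure_diff_null hMa]
  -- decomposition
  have hdec : sbSet (sb (v ++ [false])) = sbSet (sb v) \ Set.Ico L M := by
    rw [hF, hsb]
    by_cases hd : d = 0
    · simp only [sbSet, if_pos hd]
      exact (Ici_diff_Ico' hLM).symm
    · simp only [sbSet, if_neg hd]
      exact (Icc_diff_Ico' hLM).symm
  have hsub : Set.Ico L M ⊆ sbSet (sb v) := by
    rw [hsb]
    by_cases hd : d = 0
    · simp only [sbSet, if_pos hd]
      exact fun x hx => hx.1
    · simp only [sbSet, if_neg hd]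
      have hMR : M ≤ (c : ℝ) / (d : ℝ) := div_le_div_nat (by omega) (by omega) (by nlinarith)
      exact fun x hx => ⟨hx.1, le_trans (le_of_lt hx.2) hMR⟩
  have hax := hμ.2.2.2.2 v hv
  have hsm : ∀ y : ENNReal, y ≠ ⊤ → ∀ c : ENNReal, c ≤ 1 → y - c * y = (1 - c) * y := by
    intro y hy c hc
    rw [ENNReal.sub_mul (fun _ _ => hy), one_mul]
  have hcle : (if Odd v.length then ENNReal.ofReal β else ENNReal.ofReal (1 - β)) ≤ 1 := by
    split
    · exact ENNReal.ofReal_le_one.mpr hβ1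
    · exact ENNReal.ofReal_le_one.mpr (by linarith)
  rw [hdec, measure_diff hsub measurableSet_Ico.nullMeasurableSet (measure_ne_top μ _), hIco, hax,
    hsm _ (measure_ne_top μ _) _ hcle]
  congr 1
  rcases Nat.even_or_odd v.length with h | h
  · rw [if_neg (by simpa [Nat.not_odd_iff_even] using h),
      if_neg (by simpa [Nat.not_odd_iff_even] using h)]
    rw [← ENNReal.ofReal_one, ← ENNReal.ofReal_sub _ (by linarith : (0:ℝ) ≤ 1 - β)]
    norm_num
  · rw [if_pos h, if_pos h, ← ENNReal.ofReal_one, ← ENNReal.ofReal_sub _ hβ0]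
  rw [hsb]

end SBaux2

namespace SBaux2
open SBaux

variable {α : ℝ} {ν ν' : MeasureTheory.Measure ℝ}

lemma S_nil : sbSet (sb []) = Set.Ici (0:ℝ) := by norm_num [sb, sbGo, sbSet]
lemma S_tt : sbSet (sb [true]) = Set.Icc (0:ℝ) 1 := by norm_num [sb, sbGo, sbSet]
lemma S_ff : sbSet (sb [false]) = Set.Ici (1:ℝ) := by norm_num [sb, sbGo, sbSet]

lemma transfer (hα0 : 0 ≤ α) (hα1 : α ≤ 1)
    (hν : IsSternBrocotMeasure α ν) (hν' : IsSternBrocotMeasure (1 - α) ν') :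
    ∀ w : List Bool, ν (sbSet (sb w)) = ν' (sbSet (sb (w.map not))) := by
  have h10 : (0:ℝ) ≤ 1 - α := by linarith
  have h11 : 1 - α ≤ 1 := by linarith
  intro w
  induction w using List.reverseRecOn with
  | nil => simp only [List.map_nil, S_nil, mIci0 hν, mIci0 hν']
  | append_singleton w b ih =>
    have hmap : (w ++ [b]).map not = w.map not ++ [!b] := by simp
    have hlen : (List.map not w).length = w.length := by simp
    rcases Nat.eq_zero_or_pos w.length with h0 | hpos
    · have hw : w = [] := List.length_eq_zero_iff.mp h0
      subst hw
      cases b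
      · show ν (sbSet (sb [false])) = ν' (sbSet (sb [true]))
        rw [S_ff, S_tt, hν.2.2.2.1, hν'.2.2.1, sub_sub_cancel]
      · show ν (sbSet (sb [true])) = ν' (sbSet (sb [false]))
        rw [S_tt, S_ff, hν.2.2.1, hν'.2.2.2.1]
    · cases b
      · rw [mass_false hα0 hα1 hν w hpos, hmap]
        have := hν'.2.2.2.2 (List.map not w) (by omega)
        rw [hlen] at this
        rw [show (!false) = true from rfl, this, sub_sub_cancel, ih]
      · rw [hν.2.2.2.2 w hpos, hmap, show (!true) = false from rfl,
          mass_false h10 h11 hν' (List.map not w) (by omega), hlen, sub_sub_cancel, ih]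

end SBaux2

section
lemma Ici0_diff_Ioi {X : ℝ} : Set.Ici 0 \ Set.Ioi X = Set.Icc 0 X := by
  ext x
  simp only [Set.mem_diff, Set.mem_Ici, Set.mem_Ioi, Set.mem_Icc, not_lt]

lemma Icc0_diff_Ioc {X R : ℝ} (hXR : X ≤ R) : Set.Icc 0 R \ Set.Ioc X R = Set.Icc 0 X := by
  ext x
  simp only [Set.mem_diff, Set.mem_Icc, Set.mem_Ioc, not_and, not_le]
  constructor
  · rintro ⟨⟨h1, h2⟩, h3⟩
    refine ⟨h1, ?_⟩
    by_contra hx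
    push_neg at hx
    exact absurd h2 (not_le.mpr (h3 hx))
  · rintro ⟨h1, h2⟩
    exact ⟨⟨h1, le_trans h2 hXR⟩, fun hx => absurd h2 (not_le.mpr hx)⟩
end

namespace SBaux2
open SBaux

variable {α : ℝ} {ν ν' : MeasureTheory.Measure ℝ}

lemma main_lep (hα0 : 0 ≤ α) (hα1 : α ≤ 1)
    (hν : IsSternBrocotMeasure α ν) (hν' : IsSternBrocotMeasure (1 - α) ν') :
    ∀ w : List Bool,
      ν (Set.Ici (((sb w).1.1 : ℝ) / ((sb w).1.2 : ℝ))) =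
        ν' (if (sb w).1.1 = 0 then Set.Ici 0
            else Set.Icc 0 (((sb w).1.2 : ℝ) / ((sb w).1.1 : ℝ))) := by
  have h10 : (0:ℝ) ≤ 1 - α := by linarith
  have h11 : 1 - α ≤ 1 := by linarith
  haveI := hν.1
  haveI := hν'.1
  intro w
  induction w using List.reverseRecOn with
  | nil =>
    have : sb [] = ((0, 1), (1, 0)) := rfl
    rw [this]
    norm_num [mIci0 hν, mIci0 hν']
  | append_singleton w t ih =>
    rcases hsb : sb w with ⟨⟨a, b⟩, c, d⟩
    have hG := good_sb w
    rw [hsb] at hG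
    obtain ⟨h1, h2, h3⟩ := hG
    dsimp only [Good] at h1 h2 h3
    rw [hsb] at ih
    dsimp only at ih
    cases t
    case true =>
      have hT : sb (w ++ [true]) = ((a, b), (a + c, b + d)) := by rw [sb_append, hsb]; rfl
      rw [hT]
      exact ih
    case false =>
      have hbd : b + d ≠ 0 := by omega
      have hac : a + c ≠ 0 := by omega
      have hT : sb (w ++ [true]) = ((a, b), (a + c, b + d)) := by rw [sb_append, hsb]; rfl
      have hF : sb (w ++ [false]) = ((a + c, b + d), (c, d)) := by rw [sb_append, hsb]; rfl
      rw [hF]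
      dsimp only
      rw [if_neg hac]
      set L : ℝ := (a : ℝ) / (b : ℝ) with hLdef
      set M : ℝ := ((a + c : ℕ) : ℝ) / ((b + d : ℕ) : ℝ) with hMdef
      have hLM : L ≤ M := div_le_div_nat h2 (by omega) (by nlinarith)
      -- LHS computation
      have hMa : ν {M} = 0 := by
        have := atom_lep hα0 hα1 hν (w ++ [false]) (by simp)
        rw [hF] at this
        exact this
      have hTS : sbSet (sb (w ++ [true])) = Set.Icc L M := by
        rw [hT]; simp only [sbSet, if_neg hbd]; rfl
      have hIco : ν (Set.Ico L M) = ν (sbSet (sb (w ++ [true]))) := by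
        rw [hTS, ← Set.Icc_sdiff_right, measure_diff_null hMa]
      have hLHS : ν (Set.Ici M) = ν (Set.Ici L) - ν (sbSet (sb (w ++ [true]))) := by
        rw [← Ici_diff_Ico' hLM,
          measure_diff Set.Ico_subset_Ici_self measurableSet_Ico.nullMeasurableSet
            (measure_ne_top ν _), hIco]
      -- RHS computation
      have hu : sb (List.map not w) = ((d, c), (b, a)) := by rw [sb_map_not, hsb]; rfl
      have huF : sb (List.map not w ++ [false]) = ((d + b, c + a), (b, a)) := by
        rw [sb_append, hu]; rfl
      set X : ℝ := ((d + b : ℕ) : ℝ) / ((c + a : ℕ) : ℝ) with hXdef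
      have hX0 : 0 ≤ X := by positivity
      have hXa : ν' {X} = 0 := by
        have := atom_lep h10 h11 hν' (List.map not w ++ [false]) (by simp)
        rw [huF] at this
        exact this
      have htrans : ν (sbSet (sb (w ++ [true]))) = ν' (sbSet (sb (List.map not w ++ [false]))) := by
        have := transfer hα0 hα1 hν hν' (w ++ [true])
        rwa [show (w ++ [true]).map not = List.map not w ++ [false] by simp] at this
      -- the goal target set, rewritten with commuted additions
      have hgoalset : Set.Icc (0:ℝ) (((b + d : ℕ) : ℝ) / ((a + c : ℕ) : ℝ)) = Set.Icc 0 X := by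
        rw [hXdef, Nat.add_comm b d, Nat.add_comm a c]
      rw [hLHS, htrans, hgoalset]
      by_cases ha : a = 0
      · rw [if_pos ha] at ih
        have hSF : sbSet (sb (List.map not w ++ [false])) = Set.Ici X := by
          rw [huF]; simp only [sbSet]; rw [if_pos ha]
        have hIoi : ν' (Set.Ioi X) = ν' (Set.Ici X) := by
          rw [← Set.Ici_sdiff_left, measure_diff_null hXa]
        have hRHS : ν' (Set.Icc 0 X) = ν' (Set.Ici 0) - ν' (Set.Ici X) := by
          rw [← Ici0_diff_Ioi,
            measure_diff (Set.Ioi_subset_Ici_self.trans (Set.Ici_subset_Ici.mpr hX0))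
              measurableSet_Ioi.nullMeasurableSet (measure_ne_top ν' _), hIoi]
        rw [hRHS, hSF, ih]
      · rw [if_neg ha] at ih
        have ha1 : 1 ≤ a := by omega
        have hXR : X ≤ (b : ℝ) / (a : ℝ) := div_le_div_nat (by omega) ha1 (by nlinarith)
        have hSF : sbSet (sb (List.map not w ++ [false])) = Set.Icc X ((b : ℝ) / (a : ℝ)) := by
          rw [huF]; simp only [sbSet]; rw [if_neg ha]
        have hIoc : ν' (Set.Ioc X ((b : ℝ) / (a : ℝ))) = ν' (Set.Icc X ((b : ℝ) / (a : ℝ))) := by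
          rw [← Set.Icc_sdiff_left, measure_diff_null hXa]
        have hRHS : ν' (Set.Icc 0 X) = ν' (Set.Icc 0 ((b : ℝ) / (a : ℝ)))
            - ν' (Set.Icc X ((b : ℝ) / (a : ℝ))) := by
          rw [← Icc0_diff_Ioc hXR,
            measure_diff (Set.Ioc_subset_Icc_self.trans (Set.Icc_subset_Icc_left hX0))
              measurableSet_Ioc.nullMeasurableSet (measure_ne_top ν' _), hIoc]
        rw [hRHS, hSF, ih]

end SBaux2

namespace SBaux2
open SBaux

lemma sbSet_lb {I : (ℕ × ℕ) × ℕ × ℕ} {x : ℝ} (hx : x ∈ sbSet I) :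
    (I.1.1 : ℝ) / (I.1.2 : ℝ) ≤ x := by
  obtain ⟨⟨a, b⟩, c, d⟩ := I
  simp only [sbSet] at hx
  split_ifs at hx
  · exact hx
  · exact hx.1

lemma sbSet_ub {I : (ℕ × ℕ) × ℕ × ℕ} {x : ℝ} (hd : I.2.2 ≠ 0) (hx : x ∈ sbSet I) :
    x ≤ (I.2.1 : ℝ) / (I.2.2 : ℝ) := by
  obtain ⟨⟨a, b⟩, c, d⟩ := I
  simp only [sbSet] at hx
  rw [if_neg hd] at hx
  exact hx.2

def med (I : (ℕ × ℕ) × ℕ × ℕ) : ℝ :=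
  ((I.1.1 + I.2.1 : ℕ) : ℝ) / ((I.1.2 + I.2.2 : ℕ) : ℝ)

def pth (t : ℝ) : ℕ → List Bool
  | 0 => []
  | n + 1 => pth t n ++ [decide (t ≤ med (sb (pth t n)))]

def lep (t : ℝ) (n : ℕ) : ℝ :=
  ((sb (pth t n)).1.1 : ℝ) / ((sb (pth t n)).1.2 : ℝ)

variable {t : ℝ}

lemma mem_pth (ht : 0 < t) : ∀ n, t ∈ sbSet (sb (pth t n)) := by
  intro n
  induction n with
  | zero =>
    show t ∈ sbSet (sb [])
    rw [S_nil]
    exact le_of_lt ht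
  | succ n ih =>
    rcases hsb : sb (pth t n) with ⟨⟨a, b⟩, c, d⟩
    have hG := good_sb (pth t n)
    rw [hsb] at hG
    obtain ⟨h1, h2, h3⟩ := hG
    dsimp only [Good] at h1 h2 h3
    have hbd : b + d ≠ 0 := by omega
    rw [hsb] at ih
    have hL : (a : ℝ) / (b : ℝ) ≤ t := sbSet_lb ih
    show t ∈ sbSet (sb (pth t n ++ [decide (t ≤ med (sb (pth t n)))]))
    rw [sb_append, hsb]
    by_cases hm : t ≤ med ((a, b), (c, d))
    · rw [decide_eq_true hm]
      simp only [sbGo, if_pos]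
      simp only [sbSet, if_neg hbd]
      exact ⟨hL, hm⟩
    · rw [decide_eq_false hm]
      simp only [sbGo, if_neg Bool.false_ne_true]
      by_cases hd : d = 0
      · simp only [sbSet, if_pos hd]
        exact le_of_lt (not_le.mp hm)
      · simp only [sbSet, if_neg hd]
        exact ⟨le_of_lt (not_le.mp hm), sbSet_ub hd ih⟩

lemma lep_le (ht : 0 < t) (n : ℕ) : lep t n ≤ t := sbSet_lb (mem_pth ht n)

lemma lep_step (n : ℕ) : lep t n ≤ lep t (n + 1) := by
  rcases hsb : sb (pth t n) with ⟨⟨a, b⟩, c, d⟩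
  have hG := good_sb (pth t n)
  rw [hsb] at hG
  obtain ⟨h1, h2, h3⟩ := hG
  dsimp only [Good] at h1 h2 h3
  have h2' : lep t (n + 1)
      = ((sbGo ((a, b), (c, d)) [decide (t ≤ med (sb (pth t n)))]).1.1 : ℝ)
        / ((sbGo ((a, b), (c, d)) [decide (t ≤ med (sb (pth t n)))]).1.2 : ℝ) := by
    unfold lep
    rw [show pth t (n + 1) = pth t n ++ [decide (t ≤ med (sb (pth t n)))] from rfl,
      sb_append, hsb]
  rw [h2']
  cases hb : decide (t ≤ med (sb (pth t n)))
  · simp only [sbGo, if_neg Bool.false_ne_true]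
    unfold lep
    rw [hsb]
    exact div_le_div_nat h2 (by omega) (by nlinarith)
  · simp only [sbGo, if_pos]
    unfold lep
    rw [hsb]

lemma lep_mono (hmn : m ≤ n) : lep t m ≤ lep t n := by
  have : Monotone (lep t) := monotone_nat_of_le_succ fun k => lep_step k
  exact this hmn

lemma exists_d_pos (ht : 0 < t) : ∃ N, (sb (pth t N)).2.2 ≠ 0 := by
  by_contra h
  push_neg at h
  have key : ∀ n, sb (pth t n) = ((n, 1), (1, 0)) := by
    intro n
    induction n with
    | zero => rfl
    | succ n ih =>
      have hd := h (n + 1)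
      have hstep : sb (pth t (n + 1))
          = sbGo ((n, 1), (1, 0)) [decide (t ≤ med (sb (pth t n)))] := by
        rw [show pth t (n + 1) = pth t n ++ [decide (t ≤ med (sb (pth t n)))] from rfl,
          sb_append, ih]
      cases hb : decide (t ≤ med (sb (pth t n)))
      · rw [hstep, hb]
        simp [sbGo]
      · rw [hstep, hb] at hd
        simp [sbGo] at hd
  have hle : ∀ n : ℕ, (n : ℝ) ≤ t := by
    intro n
    have hm := mem_pth ht n
    rw [key n] at hm
    have := sbSet_lb hm
    simpa using this
  obtain ⟨n, hn⟩ := exists_nat_gt t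
  exact absurd (hle n) (not_le.mpr hn)

lemma d_pos_persist {N : ℕ} (hN : (sb (pth t N)).2.2 ≠ 0) :
    ∀ k, (sb (pth t (N + k))).2.2 ≠ 0 := by
  intro k
  induction k with
  | zero => exact hN
  | succ k ih =>
    rcases hsb : sb (pth t (N + k)) with ⟨⟨a, b⟩, c, d⟩
    have hG := good_sb (pth t (N + k))
    rw [hsb] at hG
    obtain ⟨h1, h2, h3⟩ := hG
    dsimp only [Good] at h1 h2 h3
    rw [hsb] at ih
    have hstep : sb (pth t (N + k + 1))
        = sbGo ((a, b), (c, d)) [decide (t ≤ med (sb (pth t (N + k))))] := by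
      rw [show pth t (N + k + 1) = pth t (N + k) ++ [decide (t ≤ med (sb (pth t (N + k))))]
        from rfl, sb_append, hsb]
    show (sb (pth t (N + (k + 1)))).2.2 ≠ 0
    rw [show N + (k + 1) = N + k + 1 by omega, hstep]
    cases hb : decide (t ≤ med (sb (pth t (N + k))))
    · simp only [sbGo, if_neg Bool.false_ne_true]
      exact ih
    · simp only [sbGo, if_pos]
      show b + d ≠ 0
      omega

lemma sum_growth {N : ℕ} (hN : (sb (pth t N)).2.2 ≠ 0) :
    ∀ k, 2 + k ≤ (sb (pth t (N + k))).1.2 + (sb (pth t (N + k))).2.2 := by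
  intro k
  induction k with
  | zero =>
    simp only [Nat.add_zero]
    have hG := good_sb (pth t N)
    obtain ⟨h1, h2, h3⟩ := hG
    omega
  | succ k ih =>
    rcases hsb : sb (pth t (N + k)) with ⟨⟨a, b⟩, c, d⟩
    have hG := good_sb (pth t (N + k))
    rw [hsb] at hG
    obtain ⟨h1, h2, h3⟩ := hG
    dsimp only [Good] at h1 h2 h3
    have hd := d_pos_persist hN k
    rw [hsb] at ih hd
    have ih' : 2 + k ≤ b + d := ih
    have hd' : d ≠ 0 := hd
    have hstep : sb (pth t (N + k + 1))
        = sbGo ((a, b), (c, d)) [decide (t ≤ med (sb (pth t (N + k))))] := by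
      rw [show pth t (N + k + 1) = pth t (N + k) ++ [decide (t ≤ med (sb (pth t (N + k))))]
        from rfl, sb_append, hsb]
    rw [show N + (k + 1) = N + k + 1 by omega, hstep]
    cases hb : decide (t ≤ med (sb (pth t (N + k))))
    · simp only [sbGo, if_neg Bool.false_ne_true]
      show 2 + (k + 1) ≤ (b + d) + d
      omega
    · simp only [sbGo, if_pos]
      show 2 + (k + 1) ≤ b + (b + d)
      omega

lemma gap (ht : 0 < t) {N : ℕ} (hN : (sb (pth t N)).2.2 ≠ 0) (k : ℕ) :
    t - lep t (N + k) ≤ 1 / ((k : ℝ) + 1) := by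
  rcases hsb : sb (pth t (N + k)) with ⟨⟨a, b⟩, c, d⟩
  have hG := good_sb (pth t (N + k))
  rw [hsb] at hG
  obtain ⟨h1, h2, h3⟩ := hG
  dsimp only [Good] at h1 h2 h3
  have hd0' := d_pos_persist hN k
  have hsum0 := sum_growth hN k
  rw [hsb] at hd0' hsum0
  have hd : d ≠ 0 := hd0'
  have hsum : 2 + k ≤ b + d := hsum0
  have hub : t ≤ (c : ℝ) / (d : ℝ) := by
    have := mem_pth ht (N + k)
    rw [hsb] at this
    exact sbSet_ub hd this
  have hlep : lep t (N + k) = (a : ℝ) / (b : ℝ) := by unfold lep; rw [hsb]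
  have hb0 : (0 : ℝ) < b := by exact_mod_cast h2
  have hd0 : (0 : ℝ) < d := by
    have : 1 ≤ d := by omega
    exact_mod_cast this
  have hdet : (b : ℝ) * c = a * d + 1 := by exact_mod_cast h1
  have hwidth : (c : ℝ) / d - (a : ℝ) / b = 1 / ((b : ℝ) * d) := by
    field_simp
    linear_combination hdet
  have hbd1 : (k : ℝ) + 1 ≤ (b : ℝ) * d := by
    have hb1 : (1 : ℝ) ≤ b := by exact_mod_cast h2
    have hd1 : (1 : ℝ) ≤ d := by
      have : 1 ≤ d := by omega
      exact_mod_cast this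
    have hsumR : 2 + (k : ℝ) ≤ (b : ℝ) + d := by exact_mod_cast hsum
    nlinarith [mul_nonneg (sub_nonneg.mpr hb1) (sub_nonneg.mpr hd1)]
  have hmono : 1 / ((b : ℝ) * d) ≤ 1 / ((k : ℝ) + 1) :=
    one_div_le_one_div_of_le (by positivity) hbd1
  rw [hlep]
  linarith

end SBaux2

namespace SBaux2
open SBaux

variable {α : ℝ} {ν ν' : MeasureTheory.Measure ℝ} {β : ℝ} {μ : MeasureTheory.Measure ℝ}

lemma zero_atom (hβ0 : 0 ≤ β) (hβ1 : β ≤ 1) (hμ : IsSternBrocotMeasure β μ) :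
    μ {(0 : ℝ)} = 0 := by
  have h := atom_lep hβ0 hβ1 hμ [true] (by simp)
  have he : sb [true] = ((0, 1), (1, 1)) := rfl
  rw [he] at h
  simpa using h

lemma key_Ici (hα0 : 0 ≤ α) (hα1 : α ≤ 1)
    (hν : IsSternBrocotMeasure α ν) (hν' : IsSternBrocotMeasure (1 - α) ν')
    {t : ℝ} (ht : 0 < t) : ν (Set.Ici t) = ν' (Set.Icc 0 t⁻¹) := by
  haveI := hν.1
  haveI := hν'.1
  obtain ⟨N, hN⟩ := exists_d_pos ht
  obtain ⟨n1, hn1⟩ := exists_nat_one_div_lt ht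
  set g : ℕ → ℝ := fun k => lep t (N + (n1 + k)) with hg
  have hgle : ∀ k, g k ≤ t := by
    intro k
    simp only [hg]
    exact lep_le ht _
  have hgap : ∀ k, t - g k ≤ 1 / ((n1 : ℝ) + k + 1) := by
    intro k
    simp only [hg]
    have h0 := gap ht hN (n1 + k)
    push_cast at h0
    linarith
  have honediv : ∀ k : ℕ, 1 / ((n1 : ℝ) + k + 1) ≤ 1 / ((n1 : ℝ) + 1) := by
    intro k
    apply one_div_le_one_div_of_le (by positivity)
    have : (0 : ℝ) ≤ k := Nat.cast_nonneg k
    linarith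
  have hgpos : ∀ k, 0 < g k := by
    intro k
    have h0 := hgap k
    have h1 := honediv k
    linarith
  have hgmono : Monotone g := by
    apply monotone_nat_of_le_succ
    intro k
    simp only [hg]
    exact lep_mono (by omega)
  have hpoint : ∀ k, ν (Set.Ici (g k)) = ν' (Set.Icc 0 (g k)⁻¹) := by
    intro k
    have hml := main_lep hα0 hα1 hν hν' (pth t (N + (n1 + k)))
    rcases hsb : sb (pth t (N + (n1 + k))) with ⟨⟨a, b⟩, c, d⟩
    rw [hsb] at hml
    dsimp only at hml
    have hgk : g k = (a : ℝ) / b := by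
      simp only [hg]
      unfold lep
      rw [hsb]
    have ha : a ≠ 0 := by
      intro h0
      have := hgpos k
      rw [hgk, h0] at this
      norm_num at this
    rw [if_neg ha] at hml
    rw [hgk, inv_div]
    exact hml
  have hI1 : ⋂ k, Set.Ici (g k) = Set.Ici t := by
    apply Set.Subset.antisymm
    · intro x hx
      simp only [Set.mem_iInter, Set.mem_Ici] at hx ⊢
      by_contra hxt
      push_neg at hxt
      obtain ⟨m, hm⟩ := exists_nat_one_div_lt (by linarith : (0 : ℝ) < t - x)
      have h1 : 1 / ((n1 : ℝ) + m + 1) ≤ 1 / ((m : ℝ) + 1) := by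
        apply one_div_le_one_div_of_le (by positivity)
        have : (0 : ℝ) ≤ n1 := Nat.cast_nonneg n1
        linarith
      have h2 := hgap m
      have h3 := hx m
      linarith
    · intro x hx
      simp only [Set.mem_iInter, Set.mem_Ici] at hx ⊢
      exact fun k => le_trans (hgle k) hx
  have hI2 : ⋂ k, Set.Icc 0 (g k)⁻¹ = Set.Icc 0 t⁻¹ := by
    apply Set.Subset.antisymm
    · intro x hx
      simp only [Set.mem_iInter, Set.mem_Icc] at hx ⊢
      have hx0 : 0 ≤ x := (hx 0).1
      refine ⟨hx0, ?_⟩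
      by_contra hxt
      push_neg at hxt
      have hxpos : 0 < x := lt_of_le_of_lt (inv_nonneg.mpr (le_of_lt ht)) hxt
      have hxinv : x⁻¹ < t := by
        have h1 := inv_strictAnti₀ (inv_pos.mpr ht) hxt
        rwa [inv_inv] at h1
      obtain ⟨m, hm⟩ := exists_nat_one_div_lt (by linarith : (0 : ℝ) < t - x⁻¹)
      have h1 : 1 / ((n1 : ℝ) + m + 1) ≤ 1 / ((m : ℝ) + 1) := by
        apply one_div_le_one_div_of_le (by positivity)
        have : (0 : ℝ) ≤ n1 := Nat.cast_nonneg n1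
        linarith
      have h2 := hgap m
      have h3 : x⁻¹ < g m := by linarith
      have h4 : (g m)⁻¹ < x := by
        have h5 := inv_strictAnti₀ (inv_pos.mpr hxpos) h3
        rwa [inv_inv] at h5
      exact absurd (hx m).2 (not_le.mpr h4)
    · intro x hx
      simp only [Set.mem_iInter, Set.mem_Icc] at hx ⊢
      intro k
      exact ⟨hx.1, le_trans hx.2 (inv_anti₀ (hgpos k) (hgle k))⟩
  have hT1 : Filter.Tendsto (fun k => ν (Set.Ici (g k))) Filter.atTop (nhds (ν (Set.Ici t))) := by
    rw [← hI1]
    exact MeasureTheory.tendsto_measure_iInter_atTop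
      (fun k => measurableSet_Ici.nullMeasurableSet)
      (fun i j hij => Set.Ici_subset_Ici.mpr (hgmono hij)) ⟨0, measure_ne_top ν _⟩
  have hT2 : Filter.Tendsto (fun k => ν (Set.Ici (g k))) Filter.atTop
      (nhds (ν' (Set.Icc 0 t⁻¹))) := by
    rw [← hI2]
    have h6 := MeasureTheory.tendsto_measure_iInter_atTop (μ := ν')
      (s := fun k => Set.Icc 0 (g k)⁻¹)
      (fun k => measurableSet_Icc.nullMeasurableSet)
      (fun i j hij => Set.Icc_subset_Icc_right (inv_anti₀ (hgpos i) (hgmono hij)))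
      ⟨0, measure_ne_top ν' _⟩
    have h7 : (fun k => ν (Set.Ici (g k))) = fun k => ν' (Set.Icc 0 (g k)⁻¹) := funext hpoint
    rw [h7]
    exact h6
  exact tendsto_nhds_unique hT1 hT2

end SBaux2

/-- `ν_α({0}) = 0` and the pushforward of `ν_α` under `x ↦ 1/x` is `ν_{1-α}`. -/
theorem sternBrocotMeasure_map_inv
    (α : ℝ) (hα0 : 0 ≤ α) (hα1 : α ≤ 1) (ν ν' : Measure ℝ)
    (hν : IsSternBrocotMeasure α ν) (hν' : IsSternBrocotMeasure (1 - α) ν') :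
    ν {0} = 0 ∧ Measure.map (fun x : ℝ => x⁻¹) ν = ν' := by
  have h10 : (0 : ℝ) ≤ 1 - α := by linarith
  have h11 : 1 - α ≤ 1 := by linarith
  haveI := hν.1
  haveI := hν'.1
  have hν0 : ν {(0 : ℝ)} = 0 := SBaux2.zero_atom hα0 hα1 hν
  have hν'0 : ν' {(0 : ℝ)} = 0 := SBaux2.zero_atom h10 h11 hν'
  have hIic0 : ν (Set.Iic (0 : ℝ)) = 0 := by
    rw [← Set.Iio_union_right]
    exact le_antisymm ((measure_union_le _ _).trans (by rw [hν.2.1, hν0, add_zero])) (zero_le)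
  have hIic0' : ν' (Set.Iic (0 : ℝ)) = 0 := by
    rw [← Set.Iio_union_right]
    exact le_antisymm ((measure_union_le _ _).trans (by rw [hν'.2.1, hν'0, add_zero])) (zero_le)
  refine ⟨hν0, ?_⟩
  haveI : IsProbabilityMeasure (Measure.map (fun x : ℝ => x⁻¹) ν) :=
    MeasureTheory.Measure.isProbabilityMeasure_map measurable_inv.aemeasurable
  apply MeasureTheory.Measure.ext_of_Iic
  intro x
  rw [Measure.map_apply measurable_inv measurableSet_Iic]
  rcases le_or_gt x 0 with hx | hx
  · have hsub : (fun y : ℝ => y⁻¹) ⁻¹' Set.Iic x ⊆ Set.Iic 0 := by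
      intro y hy
      simp only [Set.mem_preimage, Set.mem_Iic] at hy ⊢
      by_contra hy0
      push_neg at hy0
      have : 0 < y⁻¹ := inv_pos.mpr hy0
      linarith
    have h1 : ν ((fun y : ℝ => y⁻¹) ⁻¹' Set.Iic x) = 0 :=
      le_antisymm (le_trans (measure_mono hsub) (le_of_eq hIic0)) (zero_le)
    have h2 : ν' (Set.Iic x) = 0 :=
      le_antisymm (le_trans (measure_mono (Set.Iic_subset_Iic.mpr hx)) (le_of_eq hIic0'))
        (zero_le)
    rw [h1, h2]
  · have hpre : (fun y : ℝ => y⁻¹) ⁻¹' Set.Iic x = Set.Iic 0 ∪ Set.Ici x⁻¹ := by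
      ext y
      simp only [Set.mem_preimage, Set.mem_Iic, Set.mem_union, Set.mem_Ici]
      constructor
      · intro h
        rcases le_or_gt y 0 with hy | hy
        · exact Or.inl hy
        · right
          have h5 := inv_anti₀ (inv_pos.mpr hy) h
          rwa [inv_inv] at h5
      · intro h
        rcases h with hy | hy
        · exact le_trans (inv_nonpos.mpr hy) (le_of_lt hx)
        · have hy0 : 0 < y := lt_of_lt_of_le (inv_pos.mpr hx) hy
          have h5 := inv_anti₀ (inv_pos.mpr hx) hy
          rwa [inv_inv] at h5
    have hIicx : ν' (Set.Iic x) = ν' (Set.Icc 0 x) := by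
      have hdecomp : Set.Iic x = Set.Iic 0 ∪ Set.Icc 0 x := by
        ext y
        simp only [Set.mem_Iic, Set.mem_union, Set.mem_Icc]
        constructor
        · intro h
          rcases le_or_gt y 0 with hy | hy
          · exact Or.inl hy
          · exact Or.inr ⟨le_of_lt hy, h⟩
        · rintro (h | h)
          · exact le_trans h (le_of_lt hx)
          · exact h.2
      rw [hdecomp]
      refine le_antisymm ((measure_union_le _ _).trans ?_) (measure_mono Set.subset_union_right)
      rw [hIic0', zero_add]
    have hmain := SBaux2.key_Ici hα0 hα1 hν hν' (inv_pos.mpr hx)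
    rw [inv_inv] at hmain
    rw [hpre, hIicx, ← hmain]
    refine le_antisymm ((measure_union_le _ _).trans ?_) (measure_mono Set.subset_union_right)
    rw [hIic0, zero_add]
end
end

section
/- For every α ∈ [0,1], ∫₀^∞ log x dν_α(x) = −∫₀^∞ log x dν_{1−α}(x). In particular ∫₀^∞ log x dν_{1/2}(x) = 0. -/
open MeasureTheory Filter Set Topology

noncomputable section

namespace SBAux

def step (I : (ℕ × ℕ) × (ℕ × ℕ)) (t : Bool) : (ℕ × ℕ) × (ℕ × ℕ) :=
  if t then ((I.1.1, I.1.2), (I.1.1 + I.2.1, I.1.2 + I.2.2))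
  else ((I.1.1 + I.2.1, I.1.2 + I.2.2), (I.2.1, I.2.2))

lemma sbGo_cons (I : (ℕ × ℕ) × (ℕ × ℕ)) (t : Bool) (w : List Bool) :
    sbGo I (t :: w) = sbGo (step I t) w := by
  obtain ⟨⟨a, b⟩, ⟨c, d⟩⟩ := I
  cases t <;> simp [sbGo, step]

lemma sbGo_append (u v : List Bool) : ∀ I, sbGo I (u ++ v) = sbGo (sbGo I u) v := by
  induction u with
  | nil => intro I; simp [sbGo]
  | cons t u ih =>
      intro I
      rw [List.cons_append, sbGo_cons, sbGo_cons, ih]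

lemma sbGo_singleton (I : (ℕ × ℕ) × (ℕ × ℕ)) (t : Bool) : sbGo I [t] = step I t := by
  rw [sbGo_cons]; rfl

lemma sb_append (w : List Bool) (t : Bool) : sb (w ++ [t]) = step (sb w) t := by
  rw [sb, sbGo_append, ← sb, sbGo_singleton]

def Good (I : (ℕ × ℕ) × (ℕ × ℕ)) : Prop := I.1.2 * I.2.1 = I.1.1 * I.2.2 + 1

lemma good_step {I : (ℕ × ℕ) × (ℕ × ℕ)} (h : Good I) (t : Bool) : Good (step I t) := by
  obtain ⟨⟨a, b⟩, ⟨c, d⟩⟩ := I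
  cases t <;> simp only [Good, step, if_true, if_false, Bool.false_eq_true] at h ⊢ <;> nlinarith [h]

lemma good_sb (w : List Bool) : Good (sb w) := by
  induction w using List.reverseRecOn with
  | nil => simp [sb, sbGo, Good]
  | append_singleton w t ih => rw [sb_append]; exact good_step ih t

lemma good_b_pos {I : (ℕ × ℕ) × (ℕ × ℕ)} (h : Good I) : 0 < I.1.2 := by
  rcases Nat.eq_zero_or_pos I.1.2 with h0 | h0
  · exfalso; rw [Good, h0] at h; omega
  · exact h0

lemma good_c_pos {I : (ℕ × ℕ) × (ℕ × ℕ)} (h : Good I) : 0 < I.2.1 := by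
  rcases Nat.eq_zero_or_pos I.2.1 with h0 | h0
  · exfalso; rw [Good, h0] at h; omega
  · exact h0

/-- left endpoint as a real -/
def lep (I : (ℕ × ℕ) × (ℕ × ℕ)) : ℝ := (I.1.1 : ℝ) / (I.1.2 : ℝ)
/-- right endpoint as a real (garbage if `I.2.2 = 0`) -/
def rep (I : (ℕ × ℕ) × (ℕ × ℕ)) : ℝ := (I.2.1 : ℝ) / (I.2.2 : ℝ)
/-- mediant as a real -/
def med (I : (ℕ × ℕ) × (ℕ × ℕ)) : ℝ :=
  ((I.1.1 + I.2.1 : ℕ) : ℝ) / ((I.1.2 + I.2.2 : ℕ) : ℝ)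

lemma lep_le_med {I : (ℕ × ℕ) × (ℕ × ℕ)} (h : Good I) : lep I ≤ med I := by
  obtain ⟨⟨a, b⟩, ⟨c, d⟩⟩ := I
  have hb : 0 < b := good_b_pos h
  have hG : b * c = a * d + 1 := h
  rw [lep, med]
  rw [div_le_div_iff₀ (by positivity) (by push_cast; positivity)]
  push_cast
  have hG' : (b:ℝ) * c = (a:ℝ) * (d:ℝ) + 1 := by exact_mod_cast hG
  nlinarith [(Nat.cast_pos (α:=ℝ)).mpr hb, (Nat.cast_nonneg a : (0:ℝ) ≤ (a:ℝ)), (Nat.cast_nonneg d : (0:ℝ) ≤ (d:ℝ))]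

lemma med_le_rep {I : (ℕ × ℕ) × (ℕ × ℕ)} (h : Good I) (hd : I.2.2 ≠ 0) : med I ≤ rep I := by
  obtain ⟨⟨a, b⟩, ⟨c, d⟩⟩ := I
  have hb : 0 < b := good_b_pos h
  have hd' : 0 < d := Nat.pos_of_ne_zero hd
  have hG : b * c = a * d + 1 := h
  rw [med, rep]
  rw [div_le_div_iff₀ (by push_cast; positivity) (by exact_mod_cast hd')]
  push_cast
  have hG' : (b:ℝ) * c = (a:ℝ) * (d:ℝ) + 1 := by exact_mod_cast hG
  nlinarith [(Nat.cast_nonneg c : (0:ℝ) ≤ (c:ℝ)), (Nat.cast_nonneg a : (0:ℝ) ≤ (a:ℝ))]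

lemma lep_le_rep {I : (ℕ × ℕ) × (ℕ × ℕ)} (h : Good I) (hd : I.2.2 ≠ 0) : lep I ≤ rep I := by
  obtain ⟨⟨a, b⟩, ⟨c, d⟩⟩ := I
  have hb : 0 < b := good_b_pos h
  have hd' : 0 < d := Nat.pos_of_ne_zero hd
  have hG : b * c = a * d + 1 := h
  rw [lep, rep, div_le_div_iff₀ (by exact_mod_cast hb) (by exact_mod_cast hd')]
  have hG' : (b:ℝ) * c = (a:ℝ) * (d:ℝ) + 1 := by exact_mod_cast hG
  have hb' : (0:ℝ) < b := by exact_mod_cast hb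
  have hd'' : (0:ℝ) < d := by exact_mod_cast hd'
  nlinarith [(Nat.cast_nonneg a : (0:ℝ) ≤ (a:ℝ)), (Nat.cast_nonneg c : (0:ℝ) ≤ (c:ℝ))]

lemma sbSet_eq_Ici {I : (ℕ × ℕ) × (ℕ × ℕ)} (hd : I.2.2 = 0) : sbSet I = Set.Ici (lep I) := by
  obtain ⟨⟨a, b⟩, ⟨c, d⟩⟩ := I
  simp only at hd
  simp [sbSet, hd, lep]

lemma sbSet_eq_Icc {I : (ℕ × ℕ) × (ℕ × ℕ)} (hd : I.2.2 ≠ 0) :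
    sbSet I = Set.Icc (lep I) (rep I) := by
  obtain ⟨⟨a, b⟩, ⟨c, d⟩⟩ := I
  simp only at hd
  simp [sbSet, hd, lep, rep]

lemma step_true_fst (I : (ℕ × ℕ) × (ℕ × ℕ)) : (step I true).1 = I.1 := rfl

lemma lep_step_true (I : (ℕ × ℕ) × (ℕ × ℕ)) : lep (step I true) = lep I := rfl

lemma rep_step_true (I : (ℕ × ℕ) × (ℕ × ℕ)) : rep (step I true) = med I := rfl

lemma lep_step_false (I : (ℕ × ℕ) × (ℕ × ℕ)) : lep (step I false) = med I := rfl

lemma rep_step_false (I : (ℕ × ℕ) × (ℕ × ℕ)) : rep (step I false) = rep I := rfl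

lemma step_true_d (I : (ℕ × ℕ) × (ℕ × ℕ)) : (step I true).2.2 = I.1.2 + I.2.2 := rfl

lemma step_false_d (I : (ℕ × ℕ) × (ℕ × ℕ)) : (step I false).2.2 = I.2.2 := rfl

lemma sbSet_step_true {I : (ℕ × ℕ) × (ℕ × ℕ)} (h : Good I) :
    sbSet (step I true) = Set.Icc (lep I) (med I) := by
  rw [sbSet_eq_Icc, lep_step_true, rep_step_true]
  rw [step_true_d]
  have := good_b_pos h
  omega

lemma mem_sbSet_lep {I : (ℕ × ℕ) × (ℕ × ℕ)} (h : Good I) : lep I ∈ sbSet I := by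
  by_cases hd : I.2.2 = 0
  · rw [sbSet_eq_Ici hd]; exact Set.self_mem_Ici
  · rw [sbSet_eq_Icc hd]; exact Set.left_mem_Icc.2 (lep_le_rep h hd)

end SBAux

namespace SBAux

def fac (α : ℝ) (i : ℕ) (t : Bool) : ℝ := if (Odd i ↔ t = true) then α else 1 - α

def sbMassAux (α : ℝ) : ℕ → List Bool → ℝ
  | _, [] => 1
  | i, t :: w => fac α i t * sbMassAux α (i + 1) w

def sbMass (α : ℝ) (w : List Bool) : ℝ := sbMassAux α 0 w

lemma fac_nonneg {α : ℝ} (h0 : 0 ≤ α) (h1 : α ≤ 1) (i : ℕ) (t : Bool) : 0 ≤ fac α i t := by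
  rw [fac]; split <;> linarith

lemma fac_le_one {α : ℝ} (h0 : 0 ≤ α) (h1 : α ≤ 1) (i : ℕ) (t : Bool) : fac α i t ≤ 1 := by
  rw [fac]; split <;> linarith

lemma fac_add (α : ℝ) (i : ℕ) : fac α i true + fac α i false = 1 := by
  simp only [fac]
  by_cases h : Odd i <;> simp [h] <;> ring

lemma sbMassAux_append (α : ℝ) (t : Bool) : ∀ (w : List Bool) (i : ℕ),
    sbMassAux α i (w ++ [t]) = sbMassAux α i w * fac α (i + w.length) t := by
  intro w
  induction w with
  | nil => intro i; simp [sbMassAux, mul_comm]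
  | cons s w ih =>
      intro i
      simp only [List.cons_append, sbMassAux, List.length_cons, mul_assoc]
      rw [ih (i + 1),
        show i + (w.length + 1) = i + 1 + w.length from by omega]

lemma sbMass_append (α : ℝ) (w : List Bool) (t : Bool) :
    sbMass α (w ++ [t]) = sbMass α w * fac α w.length t := by
  rw [sbMass, sbMass, sbMassAux_append, Nat.zero_add]

lemma sbMassAux_nonneg {α : ℝ} (h0 : 0 ≤ α) (h1 : α ≤ 1) : ∀ (w : List Bool) (i : ℕ),
    0 ≤ sbMassAux α i w := by
  intro w
  induction w with
  | nil => intro i; simp [sbMassAux]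
  | cons t w ih => intro i; exact mul_nonneg (fac_nonneg h0 h1 _ _) (ih (i + 1))

lemma sbMass_nonneg {α : ℝ} (h0 : 0 ≤ α) (h1 : α ≤ 1) (w : List Bool) : 0 ≤ sbMass α w :=
  sbMassAux_nonneg h0 h1 w 0

lemma sbMass_split (α : ℝ) (w : List Bool) :
    sbMass α (w ++ [true]) + sbMass α (w ++ [false]) = sbMass α w := by
  rw [sbMass_append, sbMass_append, ← mul_add, fac_add, mul_one]

lemma sbMassAux_map_not (α : ℝ) : ∀ (w : List Bool) (i : ℕ),
    sbMassAux (1 - α) i (w.map not) = sbMassAux α i w := by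
  intro w
  induction w with
  | nil => intro i; simp [sbMassAux]
  | cons t w ih =>
      intro i
      simp only [List.map_cons, sbMassAux, ih (i + 1)]
      congr 1
      rw [fac, fac]
      rcases t with _ | _ <;> by_cases h : Odd i <;> simp [h] <;> ring

lemma sbMass_map_not (α : ℝ) (w : List Bool) : sbMass (1 - α) (w.map not) = sbMass α w :=
  sbMassAux_map_not α w 0

lemma fac_true_eq (α : ℝ) (i : ℕ) : fac α i true = if Odd i then α else 1 - α := by
  rw [fac]; by_cases h : Odd i <;> simp [h]

lemma fac_false_eq (α : ℝ) (i : ℕ) : fac α i false = if Odd i then 1 - α else α := by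
  rw [fac]; by_cases h : Odd i <;> simp [h]

end SBAux


namespace SBAux

lemma massBound {α : ℝ} {ν : Measure ℝ} (hν : IsSternBrocotMeasure α ν)
    (hα0 : 0 ≤ α) (hα1 : α ≤ 1) (v : List Bool) (hv : 1 ≤ v.length) (n : ℕ) :
    ν (sbSet (sb (v ++ List.replicate (2*n) true))) ≤
      ENNReal.ofReal (α*(1-α)) ^ n * ν (sbSet (sb v)) := by
  induction n with
  | zero => simp
  | succ n ih =>
      set u := v ++ List.replicate (2*n) true with hu
      have hlu : u.length = v.length + 2*n := by simp [hu]
      have h2 : v ++ List.replicate (2*(n+1)) true = (u ++ [true]) ++ [true] := by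
        rw [show 2*(n+1) = (2*n+1)+1 from by ring, List.replicate_succ', List.replicate_succ']
        simp [hu]
      have h5 := hν.2.2.2.2
      have e1 : ν (sbSet (sb ((u ++ [true]) ++ [true]))) =
          (if Odd (u ++ [true]).length then ENNReal.ofReal α else ENNReal.ofReal (1-α)) *
          ν (sbSet (sb (u ++ [true]))) := h5 _ (by simp)
      have e2 : ν (sbSet (sb (u ++ [true]))) =
          (if Odd u.length then ENNReal.ofReal α else ENNReal.ofReal (1-α)) *
          ν (sbSet (sb u)) := h5 _ (by omega)
      rw [h2, e1, e2]
      have hprod : (if Odd (u ++ [true]).length then ENNReal.ofReal α else ENNReal.ofReal (1-α)) *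
          ((if Odd u.length then ENNReal.ofReal α else ENNReal.ofReal (1-α)) * ν (sbSet (sb u)))
          = ENNReal.ofReal (α*(1-α)) * ν (sbSet (sb u)) := by
        simp only [List.length_append, List.length_singleton, Nat.odd_add_one]
        by_cases h : Odd u.length
        · simp only [h, if_true, not_true, if_false, ← mul_assoc]
          rw [← ENNReal.ofReal_mul (by linarith), mul_comm (1-α) α]
        · simp only [h, if_false, not_false_iff, if_true, ← mul_assoc]
          rw [← ENNReal.ofReal_mul hα0]
      rw [hprod]
      calc ENNReal.ofReal (α*(1-α)) * ν (sbSet (sb u))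
          ≤ ENNReal.ofReal (α*(1-α)) * (ENNReal.ofReal (α*(1-α)) ^ n * ν (sbSet (sb v))) :=
            mul_le_mul_right ih _
        _ = ENNReal.ofReal (α*(1-α)) ^ (n+1) * ν (sbSet (sb v)) := by ring

lemma lep_append_replicate (w : List Bool) (n : ℕ) :
    lep (sb (w ++ List.replicate n true)) = lep (sb w) := by
  induction n with
  | zero => simp
  | succ n ih =>
      rw [List.replicate_succ', ← List.append_assoc, sb_append, lep_step_true, ih]

lemma measure_lep_null {α : ℝ} {ν : Measure ℝ} (hν : IsSternBrocotMeasure α ν)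
    (hα0 : 0 ≤ α) (hα1 : α ≤ 1) (w : List Bool) : ν {lep (sb w)} = 0 := by
  haveI := hν.1
  suffices H : ∀ v : List Bool, 1 ≤ v.length → ν {lep (sb v)} = 0 by
    rcases w with _ | ⟨t, w⟩
    · have : lep (sb ([] : List Bool)) = lep (sb [true]) := rfl
      rw [this]; exact H [true] (by simp)
    · exact H (t :: w) (by simp)
  intro v hv
  have hlt : ENNReal.ofReal (α*(1-α)) < 1 := by
    rw [ENNReal.ofReal_lt_one]; nlinarith
  have key : ∀ n : ℕ, ν {lep (sb v)} ≤ ENNReal.ofReal (α*(1-α)) ^ n := by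
    intro n
    have h1 : ν {lep (sb v)} ≤ ν (sbSet (sb (v ++ List.replicate (2*n) true))) := by
      apply measure_mono
      rw [Set.singleton_subset_iff, ← lep_append_replicate v (2*n)]
      exact mem_sbSet_lep (good_sb _)
    refine h1.trans ((massBound hν hα0 hα1 v hv n).trans ?_)
    calc ENNReal.ofReal (α*(1-α)) ^ n * ν (sbSet (sb v))
        ≤ ENNReal.ofReal (α*(1-α)) ^ n * 1 := mul_le_mul_right prob_le_one _
      _ = ENNReal.ofReal (α*(1-α)) ^ n := mul_one _
  have h0 : ν {lep (sb v)} ≤ 0 :=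
    ge_of_tendsto (ENNReal.tendsto_pow_atTop_nhds_zero_of_lt_one hlt)
      (Filter.Eventually.of_forall key)
  exact le_antisymm h0 zero_le

end SBAux

namespace SBAux

lemma sbMass_nil (α : ℝ) : sbMass α [] = 1 := rfl

lemma sbMass_singleton_true (α : ℝ) : sbMass α [true] = 1 - α := by
  simp [sbMass, sbMassAux, fac, Nat.odd_iff]

lemma sbMass_singleton_false (α : ℝ) : sbMass α [false] = α := by
  simp [sbMass, sbMassAux, fac, Nat.odd_iff]

lemma sbSet_nil : sbSet (sb []) = Set.Ici (0:ℝ) := by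
  have : sbSet (sb []) = Set.Ici (lep (sb [])) := sbSet_eq_Ici rfl
  rw [this]
  norm_num [lep, sb, sbGo]

lemma measure_Ici_zero {ν : Measure ℝ} [IsProbabilityMeasure ν] (h : ν (Set.Iio 0) = 0) :
    ν (Set.Ici (0:ℝ)) = 1 := by
  have hc : ν (Set.Ici (0:ℝ)) + ν (Set.Iio (0:ℝ)) = 1 := by
    rw [← Set.compl_Ici (a := (0:ℝ))]
    rw [measure_add_measure_compl measurableSet_Ici]
    exact measure_univ
  rw [h, add_zero] at hc
  exact hc

lemma massFormula_true {α : ℝ} {ν : Measure ℝ} (hν : IsSternBrocotMeasure α ν)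
    (hα0 : 0 ≤ α) (hα1 : α ≤ 1) (w : List Bool)
    (IH : ν (sbSet (sb w)) = ENNReal.ofReal (sbMass α w)) :
    ν (sbSet (sb (w ++ [true]))) = ENNReal.ofReal (sbMass α (w ++ [true])) := by
  rcases w with _ | ⟨t, v⟩
  · have hset : sbSet (sb [true]) = Set.Icc (0:ℝ) 1 := by
      have hg : Good (sb ([] : List Bool)) := good_sb []
      rw [show ([true] : List Bool) = [] ++ [true] from rfl, sb_append, sbSet_step_true hg]
      norm_num [lep, med, sb, sbGo]
    simp only [List.nil_append]
    rw [hset, hν.2.2.1, sbMass_singleton_true]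
  · set u := t :: v with hu
    have h5 := hν.2.2.2.2 u (by simp [hu])
    rw [h5, IH, sbMass_append]
    have : (if Odd u.length then ENNReal.ofReal α else ENNReal.ofReal (1-α)) =
        ENNReal.ofReal (fac α u.length true) := by
      rw [fac_true_eq]
      by_cases h : Odd u.length <;> simp [h]
    rw [this, ENNReal.ofReal_mul (sbMass_nonneg hα0 hα1 u), mul_comm]

lemma massFormula {α : ℝ} {ν : Measure ℝ} (hν : IsSternBrocotMeasure α ν)
    (hα0 : 0 ≤ α) (hα1 : α ≤ 1) (w : List Bool) :
    ν (sbSet (sb w)) = ENNReal.ofReal (sbMass α w) := by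
  haveI := hν.1
  induction w using List.reverseRecOn with
  | nil => rw [sbSet_nil, sbMass_nil, ENNReal.ofReal_one, measure_Ici_zero hν.2.1]
  | append_singleton w t IH =>
      cases t
      · -- false case
        set I := sb w with hI
        have hg : Good I := good_sb w
        have hTrue := massFormula_true hν hα0 hα1 w IH
        have hmed0 : ν {med I} = 0 := by
          have := measure_lep_null hν hα0 hα1 (w ++ [false])
          rwa [sb_append, lep_step_false] at this
        have hLM : lep I ≤ med I := lep_le_med hg
        have hsetT : sbSet (sb (w ++ [true])) = Set.Icc (lep I) (med I) := by
          rw [sb_append]; exact sbSet_step_true hg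
        have hsplitM : ENNReal.ofReal (sbMass α w) =
            ENNReal.ofReal (sbMass α (w ++ [true])) + ENNReal.ofReal (sbMass α (w ++ [false])) := by
          rw [← ENNReal.ofReal_add (sbMass_nonneg hα0 hα1 _) (sbMass_nonneg hα0 hα1 _),
            sbMass_split]
        by_cases hd : I.2.2 = 0
        · have hparent : sbSet (sb w) = Set.Ici (lep I) := sbSet_eq_Ici hd
          have hchild : sbSet (sb (w ++ [false])) = Set.Ici (med I) := by
            rw [sb_append]
            have : (step I false).2.2 = 0 := by rw [step_false_d]; exact hd
            rw [sbSet_eq_Ici this, lep_step_false]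
          have key1 : ν (Set.Ici (lep I)) = ν (Set.Icc (lep I) (med I)) + ν (Set.Ioi (med I)) := by
            rw [← Set.Icc_union_Ioi_eq_Ici hLM]
            exact measure_union ((Set.Iic_disjoint_Ioi le_rfl).mono_left Set.Icc_subset_Iic_self)
              measurableSet_Ioi
          have key2 : ν (Set.Ici (med I)) = ν {med I} + ν (Set.Ioi (med I)) := by
            rw [← Set.Ioi_insert (a := med I), ← Set.singleton_union]
            exact measure_union (Set.disjoint_singleton_left.mpr (by simp)) measurableSet_Ioi
          have hIoi : ν (Set.Ioi (med I)) = ENNReal.ofReal (sbMass α (w ++ [false])) := by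
            have := key1
            rw [← hparent, IH, ← hsetT, hTrue, hsplitM] at this
            exact ((ENNReal.add_right_inj ENNReal.ofReal_ne_top).mp this).symm
          rw [hchild, key2, hmed0, zero_add, hIoi]
        · have hMR : med I ≤ rep I := med_le_rep hg hd
          have hparent : sbSet (sb w) = Set.Icc (lep I) (rep I) := sbSet_eq_Icc hd
          have hchild : sbSet (sb (w ++ [false])) = Set.Icc (med I) (rep I) := by
            rw [sb_append]
            have hd' : (step I false).2.2 ≠ 0 := by rw [step_false_d]; exact hd
            rw [sbSet_eq_Icc hd', lep_step_false, rep_step_false]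
          have key1 : ν (Set.Icc (lep I) (rep I)) =
              ν (Set.Icc (lep I) (med I)) + ν (Set.Ioc (med I) (rep I)) := by
            rw [← Set.Icc_union_Ioc_eq_Icc hLM hMR]
            exact measure_union ((Set.Iic_disjoint_Ioc le_rfl).mono_left Set.Icc_subset_Iic_self)
              measurableSet_Ioc
          have key2 : ν (Set.Icc (med I) (rep I)) = ν {med I} + ν (Set.Ioc (med I) (rep I)) := by
            rw [← Set.Ioc_insert_left hMR, ← Set.singleton_union]
            exact measure_union (Set.disjoint_singleton_left.mpr (by simp)) measurableSet_Ioc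
          have hIoc : ν (Set.Ioc (med I) (rep I)) = ENNReal.ofReal (sbMass α (w ++ [false])) := by
            have := key1
            rw [← hparent, IH, ← hsetT, hTrue, hsplitM] at this
            exact ((ENNReal.add_right_inj ENNReal.ofReal_ne_top).mp this).symm
          rw [hchild, key2, hmed0, zero_add, hIoc]
      · exact massFormula_true hν hα0 hα1 w IH

end SBAux

namespace SBAux

lemma measure_Iic_med {α : ℝ} {ν : Measure ℝ} (hν : IsSternBrocotMeasure α ν)
    (hα0 : 0 ≤ α) (hα1 : α ≤ 1) (w : List Bool) :
    ν (Set.Iic (med (sb w))) =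
      ν (Set.Iic (lep (sb w))) + ENNReal.ofReal (sbMass α (w ++ [true])) := by
  set I := sb w with hI
  have hg : Good I := good_sb w
  have hLM : lep I ≤ med I := lep_le_med hg
  have hIcc : ν (Set.Icc (lep I) (med I)) = ENNReal.ofReal (sbMass α (w ++ [true])) := by
    have h1 := massFormula hν hα0 hα1 (w ++ [true])
    rwa [sb_append, sbSet_step_true hg] at h1
  have hlep0 : ν {lep I} = 0 := measure_lep_null hν hα0 hα1 w
  have hIoc : ν (Set.Ioc (lep I) (med I)) = ENNReal.ofReal (sbMass α (w ++ [true])) := by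
    have h2 : ν (Set.Icc (lep I) (med I)) = ν {lep I} + ν (Set.Ioc (lep I) (med I)) := by
      rw [← Set.Ioc_insert_left hLM, ← Set.singleton_union]
      exact measure_union (Set.disjoint_singleton_left.mpr (by simp)) measurableSet_Ioc
    rw [hIcc, hlep0, zero_add] at h2
    exact h2.symm
  rw [← Set.Iic_union_Ioc_eq_Iic hLM,
    measure_union (Set.Iic_disjoint_Ioc le_rfl) measurableSet_Ioc, hIoc]

lemma agree_Iic_endpoints {α : ℝ} {μ₁ μ₂ : Measure ℝ}
    (h₁ : IsSternBrocotMeasure α μ₁) (h₂ : IsSternBrocotMeasure α μ₂)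
    (hα0 : 0 ≤ α) (hα1 : α ≤ 1) (w : List Bool) :
    μ₁ (Set.Iic (lep (sb w))) = μ₂ (Set.Iic (lep (sb w))) ∧
    ((sb w).2.2 ≠ 0 → μ₁ (Set.Iic (rep (sb w))) = μ₂ (Set.Iic (rep (sb w)))) := by
  have hIic0 : ∀ (μ : Measure ℝ), IsSternBrocotMeasure α μ → μ (Set.Iic (lep (sb []))) = 0 := by
    intro μ hμ
    have h0 : μ (Set.Iic (lep (sb []))) = μ (Set.Iio (lep (sb []))) + μ {lep (sb [])} := by
      rw [← Set.Iio_union_right,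
        measure_union (Set.disjoint_singleton_right.mpr (by simp)) (measurableSet_singleton _)]
    have hlep : lep (sb ([] : List Bool)) = 0 := by norm_num [lep, sb, sbGo]
    rw [h0, measure_lep_null hμ hα0 hα1 [], hlep, hμ.2.1, zero_add]
  induction w using List.reverseRecOn with
  | nil =>
      refine ⟨?_, fun h => absurd rfl h⟩
      rw [hIic0 μ₁ h₁, hIic0 μ₂ h₂]
  | append_singleton w t IH =>
      cases t
      · constructor
        · rw [sb_append, lep_step_false, measure_Iic_med h₁ hα0 hα1 w,
            measure_Iic_med h₂ hα0 hα1 w, IH.1]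
        · intro hd
          rw [sb_append, step_false_d] at hd
          rw [sb_append, rep_step_false]
          exact IH.2 hd
      · constructor
        · rw [sb_append, lep_step_true]; exact IH.1
        · intro _
          rw [sb_append, rep_step_true, measure_Iic_med h₁ hα0 hα1 w,
            measure_Iic_med h₂ hα0 hα1 w, IH.1]

lemma lep_le_of_mem {I : (ℕ × ℕ) × (ℕ × ℕ)} {x : ℝ} (hx : x ∈ sbSet I) : lep I ≤ x := by
  by_cases hd : I.2.2 = 0
  · rw [sbSet_eq_Ici hd] at hx; exact hx
  · rw [sbSet_eq_Icc hd] at hx; exact hx.1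

lemma le_rep_of_mem {I : (ℕ × ℕ) × (ℕ × ℕ)} {x : ℝ} (hd : I.2.2 ≠ 0)
    (hx : x ∈ sbSet I) : x ≤ rep I := by
  rw [sbSet_eq_Icc hd] at hx; exact hx.2

def branch (x : ℝ) : ℕ → List Bool
  | 0 => []
  | n+1 => branch x n ++ [decide (x ≤ med (sb (branch x n)))]

lemma branch_mem {x : ℝ} (hx : 0 ≤ x) : ∀ n, x ∈ sbSet (sb (branch x n)) := by
  intro n
  induction n with
  | zero => rw [branch, sbSet_nil]; exact hx
  | succ n ih =>
      set I := sb (branch x n) with hI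
      have hg : Good I := good_sb _
      rw [branch, sb_append]
      by_cases hxm : x ≤ med I
      · rw [decide_eq_true hxm, sbSet_step_true hg]
        exact ⟨lep_le_of_mem ih, hxm⟩
      · rw [decide_eq_false hxm]
        by_cases hd : I.2.2 = 0
        · have hd' : (step I false).2.2 = 0 := hd
          rw [sbSet_eq_Ici hd', lep_step_false]
          exact le_of_not_ge hxm
        · have hd' : (step I false).2.2 ≠ 0 := hd
          rw [sbSet_eq_Icc hd', lep_step_false, rep_step_false]
          exact ⟨le_of_not_ge hxm, le_rep_of_mem hd ih⟩

lemma branch_d_zero {x : ℝ} : ∀ n, (sb (branch x n)).2.2 = 0 → (sb (branch x n)).1 = (n, 1) := by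
  intro n
  induction n with
  | zero => intro _; rfl
  | succ n ih =>
      intro hd
      rw [branch, sb_append] at hd ⊢
      set I := sb (branch x n) with hI
      have hg : Good I := good_sb _
      rcases hb : decide (x ≤ med I) with _ | _
      · rw [hb] at hd
        rw [step_false_d] at hd
        have h1 : I.1 = (n, 1) := ih hd
        have hc : I.2.1 = 1 := by
          have := hg
          rw [Good, h1, hd] at this
          simpa using this
        show (I.1.1 + I.2.1, I.1.2 + I.2.2) = (n + 1, 1)
        rw [hd, hc, h1]
      · rw [hb] at hd
        rw [step_true_d] at hd
        have := good_b_pos hg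
        omega

lemma branch_d_ne_succ {x : ℝ} {n : ℕ} (h : (sb (branch x n)).2.2 ≠ 0) :
    (sb (branch x (n+1))).2.2 ≠ 0 := by
  rw [branch, sb_append]
  set I := sb (branch x n)
  have hb := good_b_pos (good_sb (branch x n))
  rcases decide (x ≤ med I) with _ | _
  · rw [step_false_d]; exact h
  · rw [step_true_d]; omega

lemma branch_d_ne_mono {x : ℝ} {N : ℕ} (h : (sb (branch x N)).2.2 ≠ 0) :
    ∀ k, (sb (branch x (N + k))).2.2 ≠ 0 := by
  intro k
  induction k with
  | zero => exact h
  | succ k ih => exact branch_d_ne_succ ih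

lemma exists_branch_d_ne {x : ℝ} (hx : 0 ≤ x) : ∃ N, (sb (branch x N)).2.2 ≠ 0 := by
  by_contra hcon
  push_neg at hcon
  set n := Nat.floor x + 1 with hn
  have h1 := branch_d_zero n (hcon n)
  have h2 : lep (sb (branch x n)) ≤ x := lep_le_of_mem (branch_mem hx n)
  rw [lep, h1] at h2
  simp only [Nat.cast_one, div_one] at h2
  have h3 : x < n := by
    rw [hn]; push_cast; exact Nat.lt_floor_add_one x
  linarith

lemma branch_D_grow {x : ℝ} {n : ℕ} (h : (sb (branch x n)).2.2 ≠ 0) :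
    (sb (branch x n)).1.2 * (sb (branch x n)).2.2 + 1 ≤
      (sb (branch x (n+1))).1.2 * (sb (branch x (n+1))).2.2 := by
  rw [branch, sb_append]
  set I := sb (branch x n)
  have hb := good_b_pos (good_sb (branch x n))
  have hd : 0 < I.2.2 := Nat.pos_of_ne_zero h
  rcases decide (x ≤ med I) with _ | _
  · show I.1.2 * I.2.2 + 1 ≤ (I.1.2 + I.2.2) * I.2.2
    nlinarith
  · show I.1.2 * I.2.2 + 1 ≤ I.1.2 * (I.1.2 + I.2.2)
    nlinarith

lemma branch_D_ge {x : ℝ} {N : ℕ} (h : (sb (branch x N)).2.2 ≠ 0) :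
    ∀ k, k + 1 ≤ (sb (branch x (N + k))).1.2 * (sb (branch x (N + k))).2.2 := by
  intro k
  induction k with
  | zero =>
      have hb := good_b_pos (good_sb (branch x N))
      have hd := Nat.pos_of_ne_zero h
      simpa using Nat.one_le_iff_ne_zero.mpr (by positivity)
  | succ k ih =>
      have h1 := branch_D_grow (branch_d_ne_mono h k)
      rw [show N + (k + 1) = N + k + 1 from rfl]
      omega

lemma rep_le_lep_add {I : (ℕ × ℕ) × (ℕ × ℕ)} (hg : Good I) (hd : I.2.2 ≠ 0) :
    rep I = lep I + 1 / ((I.1.2 : ℝ) * (I.2.2 : ℝ)) := by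
  obtain ⟨⟨a, b⟩, ⟨c, d⟩⟩ := I
  have hb : 0 < b := good_b_pos hg
  simp only at hd
  have hd' : 0 < d := Nat.pos_of_ne_zero hd
  have hG : b * c = a * d + 1 := hg
  have hG' : (b:ℝ) * c = (a:ℝ) * d + 1 := by exact_mod_cast hG
  rw [rep, lep]
  have hb' : (b:ℝ) ≠ 0 := by positivity
  have hd'' : (d:ℝ) ≠ 0 := by
    have : (0:ℝ) < d := by exact_mod_cast hd'
    positivity
  field_simp
  linear_combination hG'

lemma endpoint_density {x : ℝ} (hx : 0 ≤ x) {ε : ℝ} (hε : 0 < ε) :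
    ∃ w : List Bool, (sb w).2.2 ≠ 0 ∧ x ≤ rep (sb w) ∧ rep (sb w) ≤ x + ε := by
  obtain ⟨N, hN⟩ := exists_branch_d_ne hx
  obtain ⟨k, hk⟩ := exists_nat_one_div_lt hε
  refine ⟨branch x (N + k), branch_d_ne_mono hN k, ?_, ?_⟩
  · exact le_rep_of_mem (branch_d_ne_mono hN k) (branch_mem hx (N + k))
  · set I := sb (branch x (N + k)) with hI
    have hg : Good I := good_sb _
    have hd : I.2.2 ≠ 0 := branch_d_ne_mono hN k
    have h1 : rep I = lep I + 1 / ((I.1.2 : ℝ) * (I.2.2 : ℝ)) := rep_le_lep_add hg hd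
    have h2 : lep I ≤ x := lep_le_of_mem (branch_mem hx (N + k))
    have h3 : (k + 1 : ℝ) ≤ (I.1.2 : ℝ) * (I.2.2 : ℝ) := by
      have := branch_D_ge hN k
      push_cast
      exact_mod_cast Nat.cast_le.mpr this
    have h4 : 1 / ((I.1.2 : ℝ) * (I.2.2 : ℝ)) ≤ 1 / (k + 1 : ℝ) := by
      apply one_div_le_one_div_of_le (by positivity) h3
    have h5 : (1 : ℝ) / (k + 1 : ℝ) ≤ ε := le_of_lt (by exact_mod_cast hk)
    rw [h1]
    linarith

lemma sb_unique {α : ℝ} {μ₁ μ₂ : Measure ℝ} (hα0 : 0 ≤ α) (hα1 : α ≤ 1)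
    (h₁ : IsSternBrocotMeasure α μ₁) (h₂ : IsSternBrocotMeasure α μ₂) : μ₁ = μ₂ := by
  haveI := h₁.1
  haveI := h₂.1
  apply Measure.ext_of_Iic
  intro x
  rcases lt_or_ge x 0 with hx | hx
  · have e1 : μ₁ (Set.Iic x) = 0 := by
      refine le_antisymm ?_ zero_le
      rw [← h₁.2.1]
      exact measure_mono (fun y hy => lt_of_le_of_lt hy hx)
    have e2 : μ₂ (Set.Iic x) = 0 := by
      refine le_antisymm ?_ zero_le
      rw [← h₂.2.1]
      exact measure_mono (fun y hy => lt_of_le_of_lt hy hx)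
    rw [e1, e2]
  · have tendsto_tail : ∀ μ : Measure ℝ, IsProbabilityMeasure μ →
        Tendsto (fun n : ℕ => μ (Set.Ioc x (x + 1/(n+1)))) atTop (𝓝 0) := by
      intro μ _
      have hanti : Antitone (fun n : ℕ => Set.Ioc x (x + 1/((n:ℝ)+1))) := by
        intro n m hnm
        apply Set.Ioc_subset_Ioc_right
        have : (1:ℝ)/((m:ℝ)+1) ≤ 1/((n:ℝ)+1) := by
          apply one_div_le_one_div_of_le (by positivity)
          push_cast; linarith [(Nat.cast_le (α := ℝ)).mpr hnm]
        linarith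
      have hempty : ⋂ n : ℕ, Set.Ioc x (x + 1/((n:ℝ)+1)) = ∅ := by
        ext y
        simp only [Set.mem_iInter, Set.mem_Ioc, Set.mem_empty_iff_false, iff_false, not_forall]
        by_contra hcon
        push_neg at hcon
        have hxy : x < y := (hcon 0).1
        obtain ⟨n, hn⟩ := exists_nat_one_div_lt (sub_pos.mpr hxy)
        have := (hcon n).2
        linarith
      have := tendsto_measure_iInter_atTop (μ := μ) (s := fun n : ℕ => Set.Ioc x (x + 1/((n:ℝ)+1)))
        (fun n => measurableSet_Ioc.nullMeasurableSet) hanti ⟨0, measure_ne_top μ _⟩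
      rwa [hempty, measure_empty] at this
    have main : ∀ (ν₁ ν₂ : Measure ℝ), IsSternBrocotMeasure α ν₁ → IsSternBrocotMeasure α ν₂ →
        ν₁ (Set.Iic x) ≤ ν₂ (Set.Iic x) := by
      intro ν₁ ν₂ g₁ g₂
      haveI := g₁.1
      haveI := g₂.1
      have key : ∀ n : ℕ, ν₁ (Set.Iic x) ≤ ν₂ (Set.Iic x) + ν₂ (Set.Ioc x (x + 1/((n:ℝ)+1))) := by
        intro n
        obtain ⟨w, hd, hxr, hrx⟩ := endpoint_density hx (show (0:ℝ) < 1/((n:ℝ)+1) by positivity)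
        calc ν₁ (Set.Iic x) ≤ ν₁ (Set.Iic (rep (sb w))) := measure_mono (Set.Iic_subset_Iic.mpr hxr)
          _ = ν₂ (Set.Iic (rep (sb w))) := (agree_Iic_endpoints g₁ g₂ hα0 hα1 w).2 hd
          _ = ν₂ (Set.Iic x ∪ Set.Ioc x (rep (sb w))) := by rw [Set.Iic_union_Ioc_eq_Iic hxr]
          _ ≤ ν₂ (Set.Iic x) + ν₂ (Set.Ioc x (rep (sb w))) := measure_union_le _ _
          _ ≤ ν₂ (Set.Iic x) + ν₂ (Set.Ioc x (x + 1/((n:ℝ)+1))) := by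
              exact add_le_add_right (measure_mono (Set.Ioc_subset_Ioc_right hrx)) _
      have tend : Tendsto (fun n : ℕ => ν₂ (Set.Iic x) + ν₂ (Set.Ioc x (x + 1/((n:ℝ)+1))))
          atTop (𝓝 (ν₂ (Set.Iic x))) := by
        have := Tendsto.add
          (tendsto_const_nhds :
            Tendsto (fun _ : ℕ => ν₂ (Set.Iic x)) atTop (𝓝 (ν₂ (Set.Iic x))))
          (tendsto_tail ν₂ g₂.1)
        rwa [add_zero] at this
      exact ge_of_tendsto tend (Filter.Eventually.of_forall key)
    exact le_antisymm (main μ₁ μ₂ h₁ h₂) (main μ₂ μ₁ h₂ h₁)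

end SBAux

namespace SBAux

def flip (I : (ℕ × ℕ) × (ℕ × ℕ)) : (ℕ × ℕ) × (ℕ × ℕ) := ((I.2.2, I.2.1), (I.1.2, I.1.1))

lemma step_flip (I : (ℕ × ℕ) × (ℕ × ℕ)) (t : Bool) :
    step (flip I) (!t) = flip (step I t) := by
  obtain ⟨⟨a, b⟩, ⟨c, d⟩⟩ := I
  cases t <;> simp [step, flip, Prod.ext_iff, Nat.add_comm]

lemma sb_map_not (w : List Bool) : sb (w.map not) = flip (sb w) := by
  induction w using List.reverseRecOn with
  | nil => rfl
  | append_singleton w t ih =>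
      rw [List.map_append, List.map_singleton, sb_append, sb_append, ih, ← step_flip]

lemma preimage_Icc_inv {l r : ℝ} (hl : 0 < l) (hr : 0 < r) :
    (fun x : ℝ => x⁻¹) ⁻¹' Set.Icc l r = Set.Icc r⁻¹ l⁻¹ := by
  ext x
  simp only [Set.mem_preimage, Set.mem_Icc]
  constructor
  · rintro ⟨h1, h2⟩
    have hx : 0 < x := inv_pos.mp (lt_of_lt_of_le hl h1)
    exact ⟨(inv_le_comm₀ hx hr).mp h2, (le_inv_comm₀ hl hx).mp h1⟩
  · rintro ⟨h1, h2⟩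
    have hx : 0 < x := lt_of_lt_of_le (inv_pos.mpr hr) h1
    exact ⟨(le_inv_comm₀ hl hx).mpr h2, (inv_le_comm₀ hx hr).mpr h1⟩

lemma preimage_Ici_inv {l : ℝ} (hl : 0 < l) :
    (fun x : ℝ => x⁻¹) ⁻¹' Set.Ici l = Set.Ioc 0 l⁻¹ := by
  ext x
  simp only [Set.mem_preimage, Set.mem_Ici, Set.mem_Ioc]
  constructor
  · intro h1
    have hx : 0 < x := inv_pos.mp (lt_of_lt_of_le hl h1)
    exact ⟨hx, (le_inv_comm₀ hl hx).mp h1⟩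
  · rintro ⟨hx, h2⟩
    exact (le_inv_comm₀ hl hx).mpr h2

lemma preimage_Icc_zero_inv {r : ℝ} (hr : 0 < r) :
    (fun x : ℝ => x⁻¹) ⁻¹' Set.Icc 0 r = {(0:ℝ)} ∪ Set.Ici r⁻¹ := by
  ext x
  simp only [Set.mem_preimage, Set.mem_Icc, Set.mem_union, Set.mem_singleton_iff, Set.mem_Ici]
  constructor
  · rintro ⟨h1, h2⟩
    have hx0 : 0 ≤ x := inv_nonneg.mp h1
    rcases eq_or_lt_of_le hx0 with h | hx
    · exact Or.inl h.symm
    · exact Or.inr ((inv_le_comm₀ hx hr).mp h2)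
  · rintro (rfl | h)
    · simp [hr.le]
    · have hx : 0 < x := lt_of_lt_of_le (inv_pos.mpr hr) h
      exact ⟨inv_nonneg.mpr hx.le, (inv_le_comm₀ hx hr).mpr h⟩

lemma preimage_Ici_zero_inv : (fun x : ℝ => x⁻¹) ⁻¹' Set.Ici (0:ℝ) = Set.Ici 0 := by
  ext x; simp [inv_nonneg]

lemma preimage_Iio_zero_inv : (fun x : ℝ => x⁻¹) ⁻¹' Set.Iio (0:ℝ) = Set.Iio 0 := by
  ext x; simp [inv_lt_zero]

lemma sbSet_measurableSet (I : (ℕ × ℕ) × (ℕ × ℕ)) : MeasurableSet (sbSet I) := by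
  obtain ⟨⟨a, b⟩, ⟨c, d⟩⟩ := I
  by_cases h : d = 0
  · simp only [sbSet, if_pos h]; exact measurableSet_Ici
  · simp only [sbSet, if_neg h]; exact measurableSet_Icc

lemma measure_zero_singleton {α : ℝ} {ν : Measure ℝ} (hν : IsSternBrocotMeasure α ν)
    (hα0 : 0 ≤ α) (hα1 : α ≤ 1) : ν {(0:ℝ)} = 0 := by
  have h := measure_lep_null hν hα0 hα1 []
  have h2 : lep (sb ([] : List Bool)) = 0 := by norm_num [lep, sb, sbGo]
  rwa [h2] at h

lemma measure_preimage_sbSet {α : ℝ} {ν : Measure ℝ} (hν : IsSternBrocotMeasure α ν)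
    (hα0 : 0 ≤ α) (hα1 : α ≤ 1) (w : List Bool) :
    ν ((fun x : ℝ => x⁻¹) ⁻¹' sbSet (sb w)) = ν (sbSet (sb (w.map not))) := by
  have h0 : ν {(0:ℝ)} = 0 := measure_zero_singleton hν hα0 hα1
  have hg : Good (sb w) := good_sb w
  rw [sb_map_not]
  rcases hJ : sb w with ⟨⟨a, b⟩, ⟨c, d⟩⟩
  rw [hJ] at hg
  have hb : 0 < b := good_b_pos hg
  have hc : 0 < c := good_c_pos hg
  have hb' : (0:ℝ) < b := by exact_mod_cast hb
  have hc' : (0:ℝ) < c := by exact_mod_cast hc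
  have hflip : flip ((a, b), (c, d)) = ((d, c), (b, a)) := rfl
  rw [hflip]
  by_cases hd : d = 0
  · subst hd
    by_cases ha : a = 0
    · subst ha
      have e1 : sbSet ((0, b), (c, 0)) = Set.Ici (0:ℝ) := by
        rw [sbSet_eq_Ici rfl]; norm_num [lep]
      have e2 : sbSet ((0, c), (b, 0)) = Set.Ici (0:ℝ) := by
        rw [sbSet_eq_Ici rfl]; norm_num [lep]
      rw [e1, e2, preimage_Ici_zero_inv]
    · have ha' : (0:ℝ) < a := by
        have : 0 < a := Nat.pos_of_ne_zero ha
        exact_mod_cast this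
      have e1 : sbSet ((a, b), (c, 0)) = Set.Ici ((a:ℝ)/b) := by
        rw [sbSet_eq_Ici rfl]; norm_num [lep]
      have e2 : sbSet ((0, c), (b, a)) = Set.Icc (0:ℝ) ((b:ℝ)/a) := by
        rw [sbSet_eq_Icc (by simpa using ha)]; norm_num [lep, rep]
      have hab : (0:ℝ) < (a:ℝ)/b := by positivity
      rw [e1, e2, preimage_Ici_inv hab, inv_div]
      have hsplit : Set.Icc (0:ℝ) ((b:ℝ)/a) = {(0:ℝ)} ∪ Set.Ioc 0 ((b:ℝ)/a) := by
        rw [Set.singleton_union, Set.Ioc_insert_left (by positivity)]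
      rw [hsplit, measure_union (Set.disjoint_singleton_left.mpr (by simp)) measurableSet_Ioc,
        h0, zero_add]
  · have hd' : (0:ℝ) < d := by
      have : 0 < d := Nat.pos_of_ne_zero hd
      exact_mod_cast this
    have hcd : (0:ℝ) < (c:ℝ)/d := by positivity
    by_cases ha : a = 0
    · subst ha
      have e1 : sbSet ((0, b), (c, d)) = Set.Icc (0:ℝ) ((c:ℝ)/d) := by
        rw [sbSet_eq_Icc (by simpa using hd)]; norm_num [lep, rep]
      have e2 : sbSet ((d, c), (b, 0)) = Set.Ici ((d:ℝ)/c) := by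
        rw [sbSet_eq_Ici rfl]; norm_num [lep]
      have hdc : (0:ℝ) < (d:ℝ)/c := by positivity
      rw [e1, e2, preimage_Icc_zero_inv hcd, inv_div,
        measure_union (Set.disjoint_singleton_left.mpr
          (by simp only [Set.mem_Ici, not_le]; exact hdc)) measurableSet_Ici,
        h0, zero_add]
    · have ha' : (0:ℝ) < a := by
        have : 0 < a := Nat.pos_of_ne_zero ha
        exact_mod_cast this
      have hab : (0:ℝ) < (a:ℝ)/b := by positivity
      have e1 : sbSet ((a, b), (c, d)) = Set.Icc ((a:ℝ)/b) ((c:ℝ)/d) := by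
        rw [sbSet_eq_Icc (by simpa using hd)]; norm_num [lep, rep]
      have e2 : sbSet ((d, c), (b, a)) = Set.Icc ((d:ℝ)/c) ((b:ℝ)/a) := by
        rw [sbSet_eq_Icc (by simpa using ha)]; norm_num [lep, rep]
      rw [e1, e2, preimage_Icc_inv hab hcd, inv_div, inv_div]

end SBAux

namespace SBAux

lemma isSB_map {α : ℝ} {ν : Measure ℝ} (hν : IsSternBrocotMeasure α ν)
    (hα0 : 0 ≤ α) (hα1 : α ≤ 1) :
    IsSternBrocotMeasure (1 - α) (ν.map (fun x : ℝ => x⁻¹)) := by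
  haveI := hν.1
  have hT : Measurable (fun x : ℝ => x⁻¹) := measurable_inv
  have h0 : ν {(0:ℝ)} = 0 := measure_zero_singleton hν hα0 hα1
  refine ⟨Measure.isProbabilityMeasure_map hT.aemeasurable, ?_, ?_, ?_, ?_⟩
  · rw [Measure.map_apply hT measurableSet_Iio, preimage_Iio_zero_inv, hν.2.1]
  · rw [Measure.map_apply hT measurableSet_Icc]
    have : (fun x : ℝ => x⁻¹) ⁻¹' Set.Icc 0 1 = {(0:ℝ)} ∪ Set.Ici 1 := by
      rw [preimage_Icc_zero_inv one_pos, inv_one]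
    rw [this, measure_union (Set.disjoint_singleton_left.mpr (by simp)) measurableSet_Ici,
      h0, zero_add, hν.2.2.2.1, show (1:ℝ) - (1 - α) = α by ring]
  · rw [Measure.map_apply hT measurableSet_Ici]
    have : (fun x : ℝ => x⁻¹) ⁻¹' Set.Ici 1 = Set.Ioc (0:ℝ) 1 := by
      rw [preimage_Ici_inv one_pos, inv_one]
    rw [this]
    have hsplit : Set.Icc (0:ℝ) 1 = {(0:ℝ)} ∪ Set.Ioc 0 1 := by
      rw [Set.singleton_union, Set.Ioc_insert_left zero_le_one]
    have := hν.2.2.1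
    rw [hsplit, measure_union (Set.disjoint_singleton_left.mpr (by simp)) measurableSet_Ioc,
      h0, zero_add] at this
    exact this
  · intro v _
    rw [Measure.map_apply hT (sbSet_measurableSet _), Measure.map_apply hT (sbSet_measurableSet _),
      measure_preimage_sbSet hν hα0 hα1, measure_preimage_sbSet hν hα0 hα1,
      massFormula hν hα0 hα1, massFormula hν hα0 hα1]
    have hmap : (v ++ [true]).map not = v.map not ++ [false] := by simp
    rw [hmap, sbMass_append, fac_false_eq, List.length_map]
    by_cases h : Odd v.length
    · rw [if_pos h, if_pos h, ENNReal.ofReal_mul (sbMass_nonneg hα0 hα1 _), mul_comm]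
    · rw [if_neg h, if_neg h, ENNReal.ofReal_mul (sbMass_nonneg hα0 hα1 _), mul_comm,
        show (1:ℝ) - (1 - α) = α by ring]

end SBAux


open SBAux in
/-- `∫ log x dν_α = -∫ log x dν_{1-α}`; in particular `∫ log x dν_{1/2} = 0`. -/
theorem integral_log_sternBrocotMeasure_neg :
    (∀ α : ℝ, 0 ≤ α → α ≤ 1 → ∀ ν ν' : Measure ℝ,
      IsSternBrocotMeasure α ν → IsSternBrocotMeasure (1 - α) ν' →
      ∫ x, Real.log x ∂ν = - ∫ x, Real.log x ∂ν') ∧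
    (∀ ν : Measure ℝ, IsSternBrocotMeasure (1 / 2) ν → ∫ x, Real.log x ∂ν = 0) := by
  have part1 : ∀ α : ℝ, 0 ≤ α → α ≤ 1 → ∀ ν ν' : Measure ℝ,
      IsSternBrocotMeasure α ν → IsSternBrocotMeasure (1 - α) ν' →
      ∫ x, Real.log x ∂ν = - ∫ x, Real.log x ∂ν' := by
    intro α hα0 hα1 ν ν' hν hν'
    have hT : Measurable (fun x : ℝ => x⁻¹) := measurable_inv
    have hmapSB : IsSternBrocotMeasure (1 - α) (ν.map (fun x : ℝ => x⁻¹)) :=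
      isSB_map hν hα0 hα1
    have hν'eq : ν' = ν.map (fun x : ℝ => x⁻¹) :=
      sb_unique (by linarith) (by linarith) hν' hmapSB
    rw [hν'eq, integral_map hT.aemeasurable Real.measurable_log.aestronglyMeasurable]
    simp only [Real.log_inv]
    rw [integral_neg, neg_neg]
  refine ⟨part1, ?_⟩
  intro ν hν
  have h2 : IsSternBrocotMeasure (1 - 1/2) ν := by
    rw [show (1:ℝ) - 1/2 = 1/2 by norm_num]; exact hν
  have := part1 (1/2) (by norm_num) (by norm_num) ν ν hν h2
  linarith
end
end

section
/- Let α ∈ (0,1]. Then: (i) the pushforward of the restriction of ν_α to [0,1) under the map x ↦ 1/(1−x) equals ((1−α)/α) times the restriction of ν_α to [1,∞); (ii) the pushforward of the restriction of ν_α to (0,1] under the map x ↦ (1−x)/x equals (1−α)·ν_α. Consequently, for every ν_α-integrable function f, ∫_{[0,1)} f(1/(1−x)) dν_α(x) = ((1−α)/α)·∫_{[1,∞)} f(x) dν_α(x) and ∫_{(0,1]} f((1−x)/x) dν_α(x) = (1−α)·∫_{[0,∞)} f(x) dν_α(x). -/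
open MeasureTheory Filter Set Topology

noncomputable section

namespace SBCV

lemma sbGo_nil (I : (ℕ × ℕ) × (ℕ × ℕ)) : sbGo I [] = I := rfl

lemma sbGo_true (a b c d : ℕ) (w : List Bool) :
    sbGo ((a, b), (c, d)) (true :: w) = sbGo ((a, b), (a + c, b + d)) w := rfl

lemma sbGo_false (a b c d : ℕ) (w : List Bool) :
    sbGo ((a, b), (c, d)) (false :: w) = sbGo ((a + c, b + d), (c, d)) w := rfl

lemma sbGo_true' (a b c d : ℕ) : sbGo ((a, b), (c, d)) [true] = ((a, b), (a + c, b + d)) := rfl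

lemma sbGo_false' (a b c d : ℕ) : sbGo ((a, b), (c, d)) [false] = ((a + c, b + d), (c, d)) := rfl

lemma sbGo_append (I : (ℕ × ℕ) × (ℕ × ℕ)) (w w' : List Bool) :
    sbGo I (w ++ w') = sbGo (sbGo I w) w' := by
  induction w generalizing I with
  | nil => rfl
  | cons x t ih =>
    obtain ⟨⟨a, b⟩, ⟨c, d⟩⟩ := I
    cases x
    · rw [List.cons_append, sbGo_false, sbGo_false, ih]
    · rw [List.cons_append, sbGo_true, sbGo_true, ih]

lemma sbSet_def (a b c d : ℕ) : sbSet ((a, b), (c, d)) =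
    if d = 0 then Set.Ici ((a : ℝ) / (b : ℝ))
    else Set.Icc ((a : ℝ) / (b : ℝ)) ((c : ℝ) / (d : ℝ)) := rfl

lemma sb_def (w : List Bool) : sb w = sbGo ((0, 1), (1, 0)) w := rfl

lemma sbSet_eq_Ici (a b c : ℕ) : sbSet ((a, b), (c, 0)) = Set.Ici ((a : ℝ) / b) := by
  rw [sbSet_def, if_pos rfl]

lemma sbSet_eq_Icc {d : ℕ} (a b c : ℕ) (hd : 1 ≤ d) :
    sbSet ((a, b), (c, d)) = Set.Icc ((a : ℝ) / b) ((c : ℝ) / d) := by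
  rw [sbSet_def, if_neg (by omega)]

/-- invariant of Stern-Brocot data -/
def Inv (I : (ℕ × ℕ) × (ℕ × ℕ)) : Prop :=
  1 ≤ I.1.2 ∧ I.1.2 * I.2.1 = I.1.1 * I.2.2 + 1

lemma Inv.c_pos {a b c d : ℕ} (h : Inv ((a, b), (c, d))) : 1 ≤ c := by
  have hb : 1 ≤ b := h.1
  have hdet : b * c = a * d + 1 := h.2
  rcases Nat.eq_zero_or_pos c with hc | hc
  · subst hc; simp at hdet
  · exact hc

lemma inv_step {a b c d : ℕ} (h : Inv ((a, b), (c, d))) (x : Bool) :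
    Inv (sbGo ((a, b), (c, d)) [x]) := by
  have hb : 1 ≤ b := h.1
  have hdet : b * c = a * d + 1 := h.2
  cases x
  · rw [sbGo_false']
    exact ⟨show 1 ≤ b + d by omega, show (b + d) * c = (a + c) * d + 1 by nlinarith [hdet]⟩
  · rw [sbGo_true']
    exact ⟨show 1 ≤ b from hb, show b * (a + c) = a * (b + d) + 1 by nlinarith [hdet]⟩

lemma inv_sbGo {I : (ℕ × ℕ) × (ℕ × ℕ)} (h : Inv I) (w : List Bool) : Inv (sbGo I w) := by
  induction w generalizing I with
  | nil => exact h
  | cons x t ih =>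
    obtain ⟨⟨a, b⟩, ⟨c, d⟩⟩ := I
    have h2 := inv_step h x
    cases x
    · rw [sbGo_false']  at h2; rw [sbGo_false]; exact ih h2
    · rw [sbGo_true'] at h2; rw [sbGo_true]; exact ih h2

lemma inv_root : Inv ((0, 1), (1, 0)) := by constructor <;> simp

lemma inv_sb (w : List Bool) : Inv (sb w) := inv_sbGo inv_root w

lemma Inv.det_real {a b c d : ℕ} (h : Inv ((a, b), (c, d))) :
    (a : ℝ) * d + 1 = (b : ℝ) * c := by
  have hdet : b * c = a * d + 1 := h.2
  exact_mod_cast hdet.symm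

/-- real ordering facts -/
lemma r_lo_le_med {A B C D : ℝ} (hB : 0 < B) (hBD : 0 < B + D) (hD : 0 ≤ D)
    (hdet : A * D + 1 = B * C) : A / B ≤ (A + C) / (B + D) := by
  rw [div_le_div_iff₀ hB hBD]; nlinarith

lemma r_med_le_hi {A B C D : ℝ} (hD : 0 < D) (hBD : 0 < B + D)
    (hdet : A * D + 1 = B * C) : (A + C) / (B + D) ≤ C / D := by
  rw [div_le_div_iff₀ hBD hD]; nlinarith

lemma lo_le_med_nat {a b c d : ℕ} (h : Inv ((a, b), (c, d))) :
    (a : ℝ) / b ≤ ((a : ℝ) + c) / ((b : ℝ) + d) :=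
  r_lo_le_med (by exact_mod_cast h.1) (by have := h.1; positivity) (by positivity) h.det_real

lemma med_le_hi_nat {a b c d : ℕ} (h : Inv ((a, b), (c, d))) (hd : 1 ≤ d) :
    ((a : ℝ) + c) / ((b : ℝ) + d) ≤ (c : ℝ) / d :=
  r_med_le_hi (by exact_mod_cast hd) (by have := h.1; positivity) h.det_real

lemma lo_le_hi_nat {a b c d : ℕ} (h : Inv ((a, b), (c, d))) (hd : 1 ≤ d) :
    (a : ℝ) / b ≤ (c : ℝ) / d := (lo_le_med_nat h).trans (med_le_hi_nat h hd)

lemma sbSet_go_true {b : ℕ} (a c d : ℕ) (hb : 1 ≤ b) :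
    sbSet (sbGo ((a, b), (c, d)) [true])
      = Set.Icc ((a : ℝ) / b) (((a : ℝ) + c) / ((b : ℝ) + d)) := by
  rw [sbGo_true', sbSet_eq_Icc _ _ _ (by omega)]
  push_cast; rfl

lemma sbSet_go_true_zero {b : ℕ} (a c : ℕ) (hb : 1 ≤ b) :
    sbSet (sbGo ((a, b), (c, 0)) [true])
      = Set.Icc ((a : ℝ) / b) (((a : ℝ) + c) / (b : ℝ)) := by
  rw [sbGo_true']
  show sbSet ((a, b), (a + c, b)) = _
  rw [sbSet_eq_Icc _ _ _ hb]
  push_cast; rfl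

lemma sbSet_go_false_pos {d : ℕ} (a b c : ℕ) (hd : 1 ≤ d) :
    sbSet (sbGo ((a, b), (c, d)) [false])
      = Set.Icc (((a : ℝ) + c) / ((b : ℝ) + d)) ((c : ℝ) / d) := by
  rw [sbGo_false', sbSet_eq_Icc _ _ _ hd]
  push_cast; rfl

lemma sbSet_go_false_zero (a b c : ℕ) :
    sbSet (sbGo ((a, b), (c, 0)) [false]) = Set.Ici (((a : ℝ) + c) / ((b : ℝ))) := by
  rw [sbGo_false']
  show sbSet ((a + c, b), (c, 0)) = _
  rw [sbSet_eq_Ici]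
  push_cast; rfl

lemma lo_le_med_zero {b : ℕ} (a c : ℕ) (hb : 1 ≤ b) :
    (a : ℝ) / b ≤ ((a : ℝ) + c) / (b : ℝ) := by
  have hb' : (0 : ℝ) < b := by exact_mod_cast hb
  gcongr
  simp

lemma sbSet_union {a b c d : ℕ} (h : Inv ((a, b), (c, d))) :
    sbSet (sbGo ((a, b), (c, d)) [true]) ∪ sbSet (sbGo ((a, b), (c, d)) [false])
      = sbSet ((a, b), (c, d)) := by
  rcases Nat.eq_zero_or_pos d with hd | hd
  · subst hd
    rw [sbSet_go_true_zero _ _ h.1, sbSet_go_false_zero, sbSet_eq_Ici]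
    exact Set.Icc_union_Ici_eq_Ici (lo_le_med_zero _ _ h.1)
  · rw [sbSet_go_true _ _ _ h.1, sbSet_go_false_pos _ _ _ hd, sbSet_eq_Icc _ _ _ hd]
    exact Set.Icc_union_Icc_eq_Icc (lo_le_med_nat h) (med_le_hi_nat h hd)

lemma sbSet_inter {a b c d : ℕ} (h : Inv ((a, b), (c, d))) :
    sbSet (sbGo ((a, b), (c, d)) [true]) ∩ sbSet (sbGo ((a, b), (c, d)) [false])
      = {((a : ℝ) + c) / ((b : ℝ) + d)} := by
  rcases Nat.eq_zero_or_pos d with hd | hd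
  · subst hd
    have h1 := lo_le_med_zero (b := b) a c h.1
    rw [sbSet_go_true_zero _ _ h.1, sbSet_go_false_zero]
    rw [show ((b : ℝ) + (0 : ℕ)) = ((b : ℝ)) by push_cast; ring]
    ext x
    simp only [Set.mem_inter_iff, Set.mem_Icc, Set.mem_Ici, Set.mem_singleton_iff]
    constructor
    · rintro ⟨⟨hx1, hx2⟩, hx3⟩; linarith
    · rintro rfl; exact ⟨⟨h1, le_refl _⟩, le_refl _⟩
  · have h1 := lo_le_med_nat h
    have h2 := med_le_hi_nat h hd
    rw [sbSet_go_true _ _ _ h.1, sbSet_go_false_pos _ _ _ hd]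
    ext x
    simp only [Set.mem_inter_iff, Set.mem_Icc, Set.mem_singleton_iff]
    constructor
    · rintro ⟨⟨hx1, hx2⟩, hx3, hx4⟩; linarith
    · rintro rfl; exact ⟨⟨h1, le_refl _⟩, le_refl _, h2⟩

lemma sbSet_step_subset {a b c d : ℕ} (h : Inv ((a, b), (c, d))) (x : Bool) :
    sbSet (sbGo ((a, b), (c, d)) [x]) ⊆ sbSet ((a, b), (c, d)) := by
  rw [← sbSet_union h]
  cases x
  · exact Set.subset_union_right
  · exact Set.subset_union_left

lemma sbSet_sbGo_subset {I : (ℕ × ℕ) × (ℕ × ℕ)} (h : Inv I) (w : List Bool) :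
    sbSet (sbGo I w) ⊆ sbSet I := by
  induction w generalizing I with
  | nil => exact le_refl _
  | cons x t ih =>
    obtain ⟨⟨a, b⟩, ⟨c, d⟩⟩ := I
    have h1 : sbGo ((a, b), (c, d)) (x :: t) = sbGo (sbGo ((a, b), (c, d)) [x]) t := by
      rw [← sbGo_append]; rfl
    rw [h1]
    exact (ih (inv_step h x)).trans (sbSet_step_subset h x)

lemma sbSet_append_subset (w u : List Bool) : sbSet (sb (w ++ u)) ⊆ sbSet (sb w) := by
  rw [sb_def, sbGo_append]; exact sbSet_sbGo_subset (inv_sb w) u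

lemma sbSet_nil : sbSet (sb []) = Set.Ici (0 : ℝ) := by
  rw [sb_def, sbGo_nil, sbSet_eq_Ici]; norm_num

lemma sbSet_subset_Ici (w : List Bool) : sbSet (sb w) ⊆ Set.Ici (0 : ℝ) := by
  have h : sbSet (sb w) ⊆ sbSet (sb []) := by
    simpa using sbSet_append_subset [] w
  rw [sbSet_nil] at h
  exact h

end SBCV

namespace SBCV

def loR (I : (ℕ × ℕ) × (ℕ × ℕ)) : ℝ := (I.1.1 : ℝ) / (I.1.2 : ℝ)
def hiR (I : (ℕ × ℕ) × (ℕ × ℕ)) : ℝ := (I.2.1 : ℝ) / (I.2.2 : ℝ)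
def medR (I : (ℕ × ℕ) × (ℕ × ℕ)) : ℝ :=
  ((I.1.1 : ℝ) + (I.2.1 : ℝ)) / ((I.1.2 : ℝ) + (I.2.2 : ℝ))

/-- The generating π-system. -/
def SBC : Set (Set ℝ) :=
  {s | (∃ w : List Bool, s = sbSet (sb w)) ∨ (∃ x : ℝ, s = {x}) ∨
       (∃ q : ℚ, q ≤ 0 ∧ s = Set.Iio (q : ℝ)) ∨ s = ∅}

lemma sbSet_mem_SBC (w : List Bool) : sbSet (sb w) ∈ SBC := Or.inl ⟨w, rfl⟩
lemma singleton_mem_SBC (x : ℝ) : {x} ∈ SBC := Or.inr (Or.inl ⟨x, rfl⟩)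
lemma empty_mem_SBC : (∅ : Set ℝ) ∈ SBC := Or.inr (Or.inr (Or.inr rfl))

lemma sbSet_measurable (I : (ℕ × ℕ) × (ℕ × ℕ)) : MeasurableSet (sbSet I) := by
  obtain ⟨⟨a, b⟩, ⟨c, d⟩⟩ := I
  rw [sbSet_def]
  split_ifs
  · exact measurableSet_Ici
  · exact measurableSet_Icc

lemma list_dichotomy : ∀ w w' : List Bool, w <+: w' ∨ w' <+: w ∨
    ∃ (p u u' : List Bool) (x : Bool), w = p ++ x :: u ∧ w' = p ++ (!x) :: u' := by
  intro w
  induction w with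
  | nil => intro w'; exact Or.inl ⟨w', rfl⟩
  | cons x t ih =>
    intro w'
    cases w' with
    | nil => exact Or.inr (Or.inl ⟨x :: t, rfl⟩)
    | cons y t' =>
      by_cases hxy : x = y
      · subst hxy
        rcases ih t' with h | h | ⟨p, u, u', z, h1, h2⟩
        · obtain ⟨r, rfl⟩ := h; exact Or.inl ⟨r, rfl⟩
        · obtain ⟨r, rfl⟩ := h; exact Or.inr (Or.inl ⟨r, rfl⟩)
        · exact Or.inr (Or.inr ⟨x :: p, u, u', z, by rw [h1]; rfl, by rw [h2]; rfl⟩)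
      · refine Or.inr (Or.inr ⟨[], t, t', x, rfl, ?_⟩)
        have : y = !x := by cases x <;> cases y <;> simp_all
        rw [this]; rfl

lemma sb_cons_eq (w : List Bool) (x : Bool) (u : List Bool) :
    sb (w ++ x :: u) = sbGo (sbGo (sb w) [x]) u := by
  rw [sb_def, show w ++ x :: u = (w ++ [x]) ++ u by simp, sbGo_append, sbGo_append]
  rfl

lemma diverge_inter_subset (p u u' : List Bool) (x : Bool) :
    sbSet (sb (p ++ x :: u)) ∩ sbSet (sb (p ++ (!x) :: u')) ⊆ {medR (sb p)} := by
  rcases hP : sb p with ⟨⟨a, b⟩, ⟨c, d⟩⟩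
  have hInv : Inv ((a, b), (c, d)) := hP ▸ inv_sb p
  have h1 : sbSet (sb (p ++ x :: u)) ⊆ sbSet (sbGo ((a, b), (c, d)) [x]) := by
    rw [sb_cons_eq, hP]
    exact sbSet_sbGo_subset (inv_step hInv x) u
  have h2 : sbSet (sb (p ++ (!x) :: u')) ⊆ sbSet (sbGo ((a, b), (c, d)) [!x]) := by
    rw [sb_cons_eq, hP]
    exact sbSet_sbGo_subset (inv_step hInv (!x)) u'
  show _ ⊆ ({((a : ℝ) + c) / ((b : ℝ) + d)} : Set ℝ)
  rw [← sbSet_inter hInv]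
  cases x
  · simp only [Bool.not_false] at h2
    exact fun y hy => ⟨h2 hy.2, h1 hy.1⟩
  · simp only [Bool.not_true] at h2
    exact fun y hy => ⟨h1 hy.1, h2 hy.2⟩

lemma isPiSystem_SBC : IsPiSystem SBC := by
  rintro s (⟨w, rfl⟩ | ⟨x, rfl⟩ | ⟨q, hq, rfl⟩ | rfl) t ht hne
  · rcases ht with ⟨w', rfl⟩ | ⟨y, rfl⟩ | ⟨q', hq', rfl⟩ | rfl
    · -- SB ∩ SB
      rcases list_dichotomy w w' with h | h | ⟨p, u, u', x, rfl, rfl⟩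
      · obtain ⟨r, rfl⟩ := h
        rw [Set.inter_eq_self_of_subset_right (sbSet_append_subset w r)]
        exact sbSet_mem_SBC _
      · obtain ⟨r, rfl⟩ := h
        rw [Set.inter_eq_self_of_subset_left (sbSet_append_subset w' r)]
        exact sbSet_mem_SBC _
      · have hsub := diverge_inter_subset p u u' x
        rcases Set.subset_singleton_iff_eq.mp hsub with h | h
        · rw [h]; exact empty_mem_SBC
        · rw [h]; exact singleton_mem_SBC _
    · rcases Set.subset_singleton_iff_eq.mp (Set.inter_subset_right (s := sbSet (sb w)) (t := {y})) with h | h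
      · rw [h]; exact empty_mem_SBC
      · rw [h]; exact singleton_mem_SBC _
    · exfalso
      obtain ⟨y, hy1, hy2⟩ := hne
      have h0 : (0 : ℝ) ≤ y := sbSet_subset_Ici w hy1
      have : y < (q' : ℝ) := hy2
      have : (q' : ℝ) ≤ 0 := by exact_mod_cast hq'
      linarith
    · rw [Set.inter_empty]; exact empty_mem_SBC
  · rcases Set.subset_singleton_iff_eq.mp (Set.inter_subset_left (s := {x}) (t := t)) with h | h
    · rw [h]; exact empty_mem_SBC
    · rw [h]; exact singleton_mem_SBC _
  · rcases ht with ⟨w', rfl⟩ | ⟨y, rfl⟩ | ⟨q', hq', rfl⟩ | rfl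
    · exfalso
      obtain ⟨y, hy1, hy2⟩ := hne
      have h0 : (0 : ℝ) ≤ y := sbSet_subset_Ici w' hy2
      have : y < (q : ℝ) := hy1
      have : (q : ℝ) ≤ 0 := by exact_mod_cast hq
      linarith
    · rcases Set.subset_singleton_iff_eq.mp (Set.inter_subset_right (s := Set.Iio (q:ℝ)) (t := {y})) with h | h
      · rw [h]; exact empty_mem_SBC
      · rw [h]; exact singleton_mem_SBC _
    · rw [Set.Iio_inter_Iio]
      refine Or.inr (Or.inr (Or.inl ⟨min q q', le_trans (min_le_left _ _) hq, ?_⟩))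
      rw [Rat.cast_min]
    · rw [Set.inter_empty]; exact empty_mem_SBC
  · rw [Set.empty_inter]; exact empty_mem_SBC

end SBCV

namespace SBCV

/-- the chain of Stern-Brocot intervals containing a point `y` -/
def chain (y : ℝ) : ℕ → List Bool
  | 0 => []
  | n + 1 => chain y n ++ [if y ≤ medR (sb (chain y n)) then true else false]

lemma sb_snoc (w : List Bool) (x : Bool) : sb (w ++ [x]) = sbGo (sb w) [x] := by
  rw [sb_def, sbGo_append]; rfl

lemma mem_go_true {a b c d : ℕ} (h : Inv ((a, b), (c, d))) {y : ℝ}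
    (hy : y ∈ sbSet ((a, b), (c, d))) (hm : y ≤ medR ((a, b), (c, d))) :
    y ∈ sbSet (sbGo ((a, b), (c, d)) [true]) := by
  have hlo : (a : ℝ) / b ≤ y := by
    rcases Nat.eq_zero_or_pos d with hd | hd
    · subst hd; rw [sbSet_eq_Ici] at hy; exact hy
    · rw [sbSet_eq_Icc _ _ _ hd] at hy; exact hy.1
  rcases Nat.eq_zero_or_pos d with hd | hd
  · subst hd
    rw [sbSet_go_true_zero _ _ h.1]
    refine ⟨hlo, ?_⟩
    have : medR ((a, b), (c, 0)) = ((a : ℝ) + c) / (b : ℝ) := by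
      unfold medR; norm_num
    rw [this] at hm; exact hm
  · rw [sbSet_go_true _ _ _ h.1]
    exact ⟨hlo, hm⟩

lemma mem_go_false {a b c d : ℕ} (h : Inv ((a, b), (c, d))) {y : ℝ}
    (hy : y ∈ sbSet ((a, b), (c, d))) (hm : medR ((a, b), (c, d)) ≤ y) :
    y ∈ sbSet (sbGo ((a, b), (c, d)) [false]) := by
  rcases Nat.eq_zero_or_pos d with hd | hd
  · subst hd
    rw [sbSet_go_false_zero]
    have : medR ((a, b), (c, 0)) = ((a : ℝ) + c) / (b : ℝ) := by
      unfold medR; norm_num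
    rw [this] at hm; exact hm
  · rw [sbSet_go_false_pos _ _ _ hd]
    rw [sbSet_eq_Icc _ _ _ hd] at hy
    exact ⟨hm, hy.2⟩

lemma chain_mem {y : ℝ} (hy : 0 ≤ y) : ∀ n, y ∈ sbSet (sb (chain y n)) := by
  intro n
  induction n with
  | zero => rw [show chain y 0 = [] from rfl, sbSet_nil]; exact hy
  | succ n ih =>
    rw [show chain y (n + 1)
        = chain y n ++ [if y ≤ medR (sb (chain y n)) then true else false] from rfl,
      sb_snoc]
    rcases hP : sb (chain y n) with ⟨⟨a, b⟩, ⟨c, d⟩⟩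
    have hInv : Inv ((a, b), (c, d)) := hP ▸ inv_sb (chain y n)
    rw [hP] at ih
    split_ifs with hm
    · exact mem_go_true hInv ih (hP ▸ hm)
    · exact mem_go_false hInv ih (le_of_lt (not_le.mp (hP ▸ hm)))

lemma sb_replicate_false (n : ℕ) : sb (List.replicate n false) = ((n, 1), (1, 0)) := by
  induction n with
  | zero => rfl
  | succ n ih =>
    rw [List.replicate_succ' (n := n), sb_snoc, ih, sbGo_false']

lemma exists_pos_d (y : ℝ) : ∃ n, 1 ≤ (sb (chain y n)).2.2 := by
  by_contra hcon
  push_neg at hcon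
  have hz : ∀ n, (sb (chain y n)).2.2 = 0 := fun n => by have := hcon n; omega
  have hrep : ∀ n, chain y n = List.replicate n false := by
    intro n
    induction n with
    | zero => rfl
    | succ n ih =>
      have hstep : chain y (n + 1)
          = chain y n ++ [if y ≤ medR (sb (chain y n)) then true else false] := rfl
      by_cases hm : y ≤ medR (sb (chain y n))
      · exfalso
        have : chain y (n + 1) = chain y n ++ [true] := by rw [hstep, if_pos hm]
        have h2 := hz (n + 1)
        rw [this, sb_snoc, ih, sb_replicate_false, sbGo_true'] at h2
        simp at h2
      · rw [hstep, if_neg hm, ih, ← List.replicate_succ']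
  obtain ⟨N, hN⟩ := exists_nat_gt y
  have hm : ¬ y ≤ medR (sb (chain y N)) := by
    intro hm
    have h2 := hz (N + 1)
    rw [show chain y (N + 1)
        = chain y N ++ [if y ≤ medR (sb (chain y N)) then true else false] from rfl,
      if_pos hm, sb_snoc, hrep N, sb_replicate_false, sbGo_true'] at h2
    simp at h2
  apply hm
  rw [hrep N, sb_replicate_false]
  have hmv : medR ((N, 1), (1, 0)) = (N : ℝ) + 1 := by
    unfold medR; push_cast; norm_num
  rw [hmv]
  linarith

lemma growth_step {a b c d : ℕ} (h : Inv ((a, b), (c, d))) (hd : 1 ≤ d) (x : Bool) :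
    1 ≤ (sbGo ((a, b), (c, d)) [x]).2.2 ∧
      b * d + 1 ≤ (sbGo ((a, b), (c, d)) [x]).1.2 * (sbGo ((a, b), (c, d)) [x]).2.2 := by
  have hb := h.1
  cases x
  · rw [sbGo_false']
    refine ⟨show 1 ≤ d from hd, ?_⟩
    show b * d + 1 ≤ (b + d) * d
    nlinarith
  · rw [sbGo_true']
    refine ⟨show 1 ≤ b + d by omega, ?_⟩
    show b * d + 1 ≤ b * (b + d)
    nlinarith

lemma chain_growth {y : ℝ} {n₀ : ℕ} (h : 1 ≤ (sb (chain y n₀)).2.2) :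
    ∀ k, 1 ≤ (sb (chain y (n₀ + k))).2.2 ∧
      k + 1 ≤ (sb (chain y (n₀ + k))).1.2 * (sb (chain y (n₀ + k))).2.2 := by
  intro k
  induction k with
  | zero =>
    simp only [Nat.add_zero]
    refine ⟨h, ?_⟩
    have hb : 1 ≤ (sb (chain y n₀)).1.2 := (inv_sb (chain y n₀)).1
    have := Nat.mul_le_mul hb h
    omega
  | succ k ih =>
    have hstep : chain y (n₀ + (k + 1))
        = chain y (n₀ + k) ++ [if y ≤ medR (sb (chain y (n₀ + k))) then true else false] := rfl
    generalize (if y ≤ medR (sb (chain y (n₀ + k))) then true else false) = xb at hstep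
    rw [hstep, sb_snoc]
    rcases hP : sb (chain y (n₀ + k)) with ⟨⟨a, b⟩, ⟨c, d⟩⟩
    have hInv : Inv ((a, b), (c, d)) := hP ▸ inv_sb (chain y (n₀ + k))
    rw [hP] at ih
    have hg := growth_step hInv ih.1 xb
    have ih2 : k + 1 ≤ b * d := ih.2
    exact ⟨hg.1, by have := hg.2; omega⟩

lemma width_eq {a b c d : ℕ} (h : Inv ((a, b), (c, d))) (hd : 1 ≤ d) :
    (c : ℝ) / d - (a : ℝ) / b = 1 / ((b : ℝ) * d) := by
  have hb' : (0 : ℝ) < b := by exact_mod_cast h.1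
  have hd' : (0 : ℝ) < d := by exact_mod_cast hd
  have hdet := h.det_real
  have e1 : (c : ℝ) / d - (a : ℝ) / b = ((b : ℝ) * c - (a : ℝ) * d) / ((b : ℝ) * d) := by
    field_simp
  rw [e1, show (b : ℝ) * c - (a : ℝ) * d = 1 by linarith]

lemma shrink {y x : ℝ} (hy : 0 ≤ y) (hx : y < x) :
    ∃ w : List Bool, y ∈ sbSet (sb w) ∧ 1 ≤ (sb w).2.2 ∧ hiR (sb w) < x := by
  obtain ⟨n₀, hn₀⟩ := exists_pos_d y
  obtain ⟨k, hk⟩ := exists_nat_one_div_lt (show (0 : ℝ) < x - y by linarith)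
  obtain ⟨hd1, hbd⟩ := chain_growth hn₀ k
  refine ⟨chain y (n₀ + k), chain_mem hy _, hd1, ?_⟩
  rcases hP : sb (chain y (n₀ + k)) with ⟨⟨a, b⟩, ⟨c, d⟩⟩
  have hInv : Inv ((a, b), (c, d)) := hP ▸ inv_sb _
  rw [hP] at hd1 hbd
  have hmem := chain_mem hy (n₀ + k)
  rw [hP, sbSet_eq_Icc _ _ _ hd1] at hmem
  have hw := width_eq hInv hd1
  have hb' : (0 : ℝ) < b := by exact_mod_cast hInv.1
  have hd' : (0 : ℝ) < d := by exact_mod_cast hd1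
  have hbd' : ((k : ℝ) + 1) ≤ (b : ℝ) * d := by exact_mod_cast hbd
  have h1 : 1 / ((b : ℝ) * d) ≤ 1 / ((k : ℝ) + 1) := by
    apply one_div_le_one_div_of_le (by positivity) hbd'
  show (c : ℝ) / d < x
  have : (c : ℝ) / d = (a : ℝ) / b + 1 / ((b : ℝ) * d) := by linarith
  calc (c : ℝ) / d = (a : ℝ) / b + 1 / ((b : ℝ) * d) := this
    _ ≤ y + 1 / ((k : ℝ) + 1) := add_le_add hmem.1 h1
    _ < y + (x - y) := by linarith
    _ = x := by ring

end SBCV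

namespace SBCV

lemma icc0_lo_hi (w : List Bool) :
    MeasurableSet[MeasurableSpace.generateFrom SBC] (Set.Icc 0 (loR (sb w))) ∧
      (1 ≤ (sb w).2.2 →
        MeasurableSet[MeasurableSpace.generateFrom SBC] (Set.Icc 0 (hiR (sb w)))) := by
  induction w using List.reverseRecOn with
  | nil =>
    constructor
    · have hv : loR (sb []) = 0 := by
        rw [sb_def, sbGo_nil]; unfold loR; norm_num
      rw [hv, Set.Icc_self]
      exact MeasurableSpace.measurableSet_generateFrom (singleton_mem_SBC 0)
    · intro h; exfalso; rw [sb_def, sbGo_nil] at h; simp at h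
  | append_singleton w x ih =>
    rcases hP : sb w with ⟨⟨a, b⟩, ⟨c, d⟩⟩
    have hInv : Inv ((a, b), (c, d)) := hP ▸ inv_sb w
    have hb := hInv.1
    have key : MeasurableSet[MeasurableSpace.generateFrom SBC]
        (Set.Icc (0 : ℝ) (((a : ℝ) + c) / ((b : ℝ) + d))) := by
      have hcup : Set.Icc (0 : ℝ) (((a : ℝ) + c) / ((b : ℝ) + d))
          = Set.Icc 0 ((a : ℝ) / b) ∪ sbSet (sb (w ++ [true])) := by
        rw [sb_snoc, hP, sbSet_go_true _ _ _ hb,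
          Set.Icc_union_Icc_eq_Icc (by positivity) (lo_le_med_nat hInv)]
      rw [hcup]
      refine MeasurableSet.union ?_
        (MeasurableSpace.measurableSet_generateFrom (sbSet_mem_SBC _))
      have h1 := ih.1
      rw [hP] at h1
      exact h1
    cases x
    · constructor
      · rw [sb_snoc, hP, sbGo_false']
        unfold loR
        simp only []
        push_cast
        exact key
      · intro hd
        rw [sb_snoc, hP, sbGo_false'] at hd ⊢
        unfold hiR
        simp only [] at hd ⊢
        have h2 := ih.2
        rw [hP] at h2
        exact h2 hd
    · constructor
      · rw [sb_snoc, hP, sbGo_true']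
        unfold loR
        simp only []
        have h1 := ih.1
        rw [hP] at h1
        exact h1
      · intro _
        rw [sb_snoc, hP, sbGo_true']
        unfold hiR
        simp only []
        push_cast
        exact key

lemma mem_le_hiR {w : List Bool} {y : ℝ} (hy : y ∈ sbSet (sb w))
    (hd : 1 ≤ (sb w).2.2) : y ≤ hiR (sb w) := by
  rcases hP : sb w with ⟨⟨a, b⟩, ⟨c, d⟩⟩
  rw [hP] at hy hd
  rw [sbSet_eq_Icc _ _ _ hd] at hy
  exact hy.2

lemma iio_mem_gen (x : ℝ) :
    MeasurableSet[MeasurableSpace.generateFrom SBC] (Set.Iio x) := by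
  rcases le_or_gt x 0 with hx | hx
  · have he : Set.Iio x = ⋃ q : {q : ℚ // (q : ℝ) < x}, Set.Iio ((q : ℚ) : ℝ) := by
      ext y
      simp only [Set.mem_Iio, Set.mem_iUnion]
      constructor
      · intro hy
        obtain ⟨q, hq1, hq2⟩ := exists_rat_btwn hy
        exact ⟨⟨q, hq2⟩, hq1⟩
      · rintro ⟨⟨q, hq⟩, hyq⟩
        exact lt_trans hyq hq
    rw [he]
    refine MeasurableSet.iUnion fun q => MeasurableSpace.measurableSet_generateFrom ?_
    refine Or.inr (Or.inr (Or.inl ⟨q.1, ?_, rfl⟩))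
    have : ((q : ℚ) : ℝ) < x := q.2
    have : ((q : ℚ) : ℝ) ≤ 0 := by linarith
    exact_mod_cast this
  · have he : Set.Iio x = Set.Iio (0 : ℝ) ∪
        ⋃ w : {w : List Bool // 1 ≤ (sb w).2.2 ∧ hiR (sb w) < x},
          Set.Icc 0 (hiR (sb w.1)) := by
      ext y
      simp only [Set.mem_Iio, Set.mem_union, Set.mem_iUnion, Set.mem_Icc]
      constructor
      · intro hy
        rcases lt_or_ge y 0 with hy0 | hy0
        · exact Or.inl hy0
        · obtain ⟨w, hw1, hw2, hw3⟩ := shrink hy0 hy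
          exact Or.inr ⟨⟨w, hw2, hw3⟩, hy0, mem_le_hiR hw1 hw2⟩
      · rintro (hy | ⟨⟨w, hw1, hw2⟩, hy1, hy2⟩)
        · linarith
        · calc y ≤ hiR (sb w) := hy2
            _ < x := hw2
    rw [he]
    refine MeasurableSet.union ?_ (MeasurableSet.iUnion fun w => (icc0_lo_hi w.1).2 w.2.1)
    refine MeasurableSpace.measurableSet_generateFrom (Or.inr (Or.inr (Or.inl ⟨0, le_refl _, ?_⟩)))
    norm_num

lemma gen_SBC : (inferInstance : MeasurableSpace ℝ) = MeasurableSpace.generateFrom SBC := by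
  refine le_antisymm ?_ (MeasurableSpace.generateFrom_le ?_)
  · conv_lhs => rw [BorelSpace.measurable_eq (α := ℝ), borel_eq_generateFrom_Iio]
    exact MeasurableSpace.generateFrom_le (by rintro _ ⟨x, rfl⟩; exact iio_mem_gen x)
  · rintro s (⟨w, rfl⟩ | ⟨y, rfl⟩ | ⟨q, hq, rfl⟩ | rfl)
    · exact sbSet_measurable _
    · exact measurableSet_singleton y
    · exact measurableSet_Iio
    · exact MeasurableSet.empty

lemma ext_meas {μ₁ μ₂ : Measure ℝ} [IsFiniteMeasure μ₁] [IsFiniteMeasure μ₂]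
    (hsb : ∀ w, μ₁ (sbSet (sb w)) = μ₂ (sbSet (sb w)))
    (h1 : ∀ x : ℝ, μ₁ {x} = 0) (h2 : ∀ x : ℝ, μ₂ {x} = 0)
    (hn1 : μ₁ (Set.Iio 0) = 0) (hn2 : μ₂ (Set.Iio 0) = 0) : μ₁ = μ₂ := by
  refine ext_of_generate_finite SBC gen_SBC isPiSystem_SBC ?_ ?_
  · rintro s (⟨w, rfl⟩ | ⟨y, rfl⟩ | ⟨q, hq, rfl⟩ | rfl)
    · exact hsb w
    · rw [h1, h2]
    · rw [measure_mono_null (Set.Iio_subset_Iio (by exact_mod_cast hq)) hn1,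
        measure_mono_null (Set.Iio_subset_Iio (by exact_mod_cast hq)) hn2]
    · simp
  · have e : (Set.univ : Set ℝ) = Set.Iio 0 ∪ Set.Ici 0 := (Set.Iio_union_Ici).symm

    have hIci := hsb []
    rw [sbSet_nil] at hIci
    rw [e, measure_union (Set.Iio_disjoint_Ici le_rfl) measurableSet_Ici,
      measure_union (Set.Iio_disjoint_Ici le_rfl) measurableSet_Ici, hn1, hn2, hIci]

end SBCV

namespace SBCV

open scoped ENNReal

def fac (α : ℝ) (r : ℕ) (x : Bool) : ℝ≥0∞ :=
  if x then (if Odd r then ENNReal.ofReal α else ENNReal.ofReal (1 - α))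
  else (if Odd r then ENNReal.ofReal (1 - α) else ENNReal.ofReal α)

lemma fac_true (α : ℝ) (r : ℕ) :
    fac α r true = if Odd r then ENNReal.ofReal α else ENNReal.ofReal (1 - α) := rfl

lemma fac_false (α : ℝ) (r : ℕ) :
    fac α r false = if Odd r then ENNReal.ofReal (1 - α) else ENNReal.ofReal α := rfl

lemma odd_succ_iff (r : ℕ) : Odd (r + 1) ↔ ¬ Odd r := by
  rw [Nat.odd_add_one]

lemma fac_flip (α : ℝ) (r : ℕ) (x : Bool) : fac α (r + 1) x = fac α r (!x) := by
  by_cases hr : Odd r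
  · have h2 : ¬ Odd (r + 1) := by rw [odd_succ_iff]; simp [hr]
    cases x
    · rw [fac_false, Bool.not_false, fac_true, if_neg h2, if_pos hr]
    · rw [fac_true, Bool.not_true, fac_false, if_neg h2, if_pos hr]
  · have h2 : Odd (r + 1) := (odd_succ_iff r).mpr hr
    cases x
    · rw [fac_false, Bool.not_false, fac_true, if_pos h2, if_neg hr]
    · rw [fac_true, Bool.not_true, fac_false, if_pos h2, if_neg hr]

lemma fac_ne_top (α : ℝ) (r : ℕ) (x : Bool) : fac α r x ≠ ⊤ := by
  cases x
  · rw [fac_false]; split_ifs <;> exact ENNReal.ofReal_ne_top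
  · rw [fac_true]; split_ifs <;> exact ENNReal.ofReal_ne_top

lemma fac_add_one {α : ℝ} (hα0 : 0 ≤ α) (hα1 : α ≤ 1) (r : ℕ) :
    fac α r true + fac α r false = 1 := by
  have h : ENNReal.ofReal α + ENNReal.ofReal (1 - α) = 1 := by
    rw [← ENNReal.ofReal_add hα0 (by linarith), show α + (1 - α) = 1 by ring,
      ENNReal.ofReal_one]
  by_cases hr : Odd r
  · rw [fac_true, fac_false, if_pos hr, if_pos hr]; exact h
  · rw [fac_true, fac_false, if_neg hr, if_neg hr, add_comm]; exact h

lemma fac_le {α : ℝ} (r : ℕ) (x : Bool) :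
    fac α r x ≤ ENNReal.ofReal (max α (1 - α)) := by
  cases x
  · rw [fac_false]
    split_ifs
    · exact ENNReal.ofReal_le_ofReal (le_max_right _ _)
    · exact ENNReal.ofReal_le_ofReal (le_max_left _ _)
  · rw [fac_true]
    split_ifs
    · exact ENNReal.ofReal_le_ofReal (le_max_left _ _)
    · exact ENNReal.ofReal_le_ofReal (le_max_right _ _)

section MeasureFacts

variable {α : ℝ} {ν : Measure ℝ}
variable (hprob : IsProbabilityMeasure ν)
variable (hneg : ν (Set.Iio 0) = 0)
variable (h01 : ν (Set.Icc 0 1) = ENNReal.ofReal (1 - α))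
variable (h1i : ν (Set.Ici 1) = ENNReal.ofReal α)
variable (hsplit : ∀ w : List Bool, 1 ≤ w.length →
    ν (sbSet (sb (w ++ [true]))) =
      (if Odd w.length then ENNReal.ofReal α else ENNReal.ofReal (1 - α)) * ν (sbSet (sb w)))
variable (hα0 : 0 < α) (hα1 : α ≤ 1)

include hprob hneg in
lemma nu_Ici_zero : ν (Set.Ici (0 : ℝ)) = 1 := by
  have h := measure_univ (μ := ν)
  rw [← Set.Iio_union_Ici (a := (0 : ℝ)),
    measure_union (Set.Iio_disjoint_Ici le_rfl) measurableSet_Ici, hneg, zero_add] at h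
  exact h

lemma sbSet_true' : sbSet (sb [true]) = Set.Icc (0 : ℝ) 1 := by
  rw [sb_def, sbGo_true', sbSet_eq_Icc _ _ _ (by omega)]
  norm_num

lemma sbSet_false' : sbSet (sb [false]) = Set.Ici (1 : ℝ) := by
  rw [sb_def, sbGo_false', sbSet_eq_Ici]
  norm_num

lemma lo_mem_sbSet (w : List Bool) : loR (sb w) ∈ sbSet (sb w) := by
  rcases hP : sb w with ⟨⟨a, b⟩, ⟨c, d⟩⟩
  have hInv : Inv ((a, b), (c, d)) := hP ▸ inv_sb w
  rcases Nat.eq_zero_or_pos d with hd | hd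
  · subst hd
    rw [sbSet_eq_Ici]
    exact Set.mem_Ici.mpr (le_refl ((a : ℝ) / b))
  · rw [sbSet_eq_Icc _ _ _ hd]
    exact ⟨le_refl ((a : ℝ) / b), lo_le_hi_nat hInv hd⟩

lemma fst_sbGo_true (I : (ℕ × ℕ) × (ℕ × ℕ)) : (sbGo I [true]).1 = I.1 := by
  rcases I with ⟨⟨a, b⟩, ⟨c, d⟩⟩; rw [sbGo_true']

lemma lo_append_replicate_true (w : List Bool) (k : ℕ) :
    loR (sb (w ++ List.replicate k true)) = loR (sb w) := by
  induction k with
  | zero => simp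
  | succ k ih =>
    rw [List.replicate_succ' (n := k), ← List.append_assoc, sb_snoc]
    unfold loR
    rw [fst_sbGo_true]
    exact ih

include hsplit hα0 hα1 in
lemma true_true_step (u : List Bool) (hu : 1 ≤ u.length) :
    ν (sbSet (sb (u ++ [true, true]))) =
      ENNReal.ofReal (α * (1 - α)) * ν (sbSet (sb u)) := by
  have e1 : u ++ [true, true] = (u ++ [true]) ++ [true] := by simp
  rw [e1, hsplit (u ++ [true]) (by simp), hsplit u hu]
  have hlen : (u ++ [true]).length = u.length + 1 := by simp
  rw [hlen]
  rcases Nat.even_or_odd u.length with hr | hr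
  · have h1 : ¬ Odd u.length := Nat.not_odd_iff_even.mpr hr
    have h2 : Odd (u.length + 1) := Even.add_one hr
    rw [if_pos h2, if_neg h1, ← mul_assoc, ← ENNReal.ofReal_mul hα0.le]
  · have h2 : ¬ Odd (u.length + 1) := by rw [odd_succ_iff]; simp [hr]
    rw [if_neg h2, if_pos hr, ← mul_assoc, ← ENNReal.ofReal_mul (by linarith),
      show (1 - α) * α = α * (1 - α) by ring]

include hprob hsplit hα0 hα1 in
lemma atom_lo_zero (w : List Bool) (hw : 1 ≤ w.length) : ν {loR (sb w)} = 0 := by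
  set t : ℝ := α * (1 - α) with ht
  have ht0 : 0 ≤ t := mul_nonneg hα0.le (by linarith)
  have ht1 : t < 1 := by nlinarith
  have hbound : ∀ k, ν (sbSet (sb (w ++ List.replicate (2 * k) true)))
      ≤ (ENNReal.ofReal t) ^ k := by
    intro k
    induction k with
    | zero =>
      haveI := hprob
      simpa using prob_le_one
    | succ k ih =>
      have e1 : w ++ List.replicate (2 * (k + 1)) true
          = (w ++ List.replicate (2 * k) true) ++ [true, true] := by
        rw [show 2 * (k + 1) = 2 * k + 2 by ring, List.replicate_add, ← List.append_assoc]
        rfl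
      rw [e1, true_true_step hsplit hα0 hα1 _ (by simp; omega)]
      calc ENNReal.ofReal t * ν (sbSet (sb (w ++ List.replicate (2 * k) true)))
          ≤ ENNReal.ofReal t * (ENNReal.ofReal t) ^ k := mul_le_mul_right ih _
        _ = (ENNReal.ofReal t) ^ (k + 1) := by rw [pow_succ, mul_comm]
  have hmem : ∀ k, ν {loR (sb w)} ≤ (ENNReal.ofReal t) ^ k := by
    intro k
    refine le_trans (measure_mono ?_) (hbound k)
    intro y hy
    rw [Set.mem_singleton_iff] at hy
    subst hy
    rw [← lo_append_replicate_true w (2 * k)]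
    exact lo_mem_sbSet _
  have hlim : Tendsto (fun k => (ENNReal.ofReal t) ^ k) atTop (nhds 0) := by
    have h1 : Tendsto (fun k : ℕ => t ^ k) atTop (nhds 0) :=
      tendsto_pow_atTop_nhds_zero_of_lt_one ht0 ht1
    have h2 := ENNReal.tendsto_ofReal h1
    rw [ENNReal.ofReal_zero] at h2
    convert h2 using 2 with k
    rw [ENNReal.ofReal_pow ht0]
  exact le_zero_iff.mp (ge_of_tendsto' hlim hmem)

include hprob hneg h01 h1i hsplit hα0 hα1 in
lemma FACT (w : List Bool) (x : Bool) :
    ν (sbSet (sb (w ++ [x]))) = fac α w.length x * ν (sbSet (sb w)) := by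
  cases x
  · -- false
    rcases Nat.eq_zero_or_pos w.length with hw | hw
    · have hwnil : w = [] := List.eq_nil_of_length_eq_zero hw
      subst hwnil
      rw [show ([] : List Bool) ++ [false] = [false] by rfl, sbSet_false', h1i, sbSet_nil,
        nu_Ici_zero hprob hneg, mul_one]
      unfold fac
      norm_num
    · rcases hP : sb w with ⟨⟨a, b⟩, ⟨c, d⟩⟩
      have hInv : Inv ((a, b), (c, d)) := hP ▸ inv_sb w
      have hT : ν (sbSet (sb (w ++ [true]))) = fac α w.length true * ν (sbSet (sb w)) := by
        rw [hsplit w hw]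
        congr 1
      have hkey := measure_union_add_inter (μ := ν)
        (sbSet (sbGo ((a, b), (c, d)) [true])) (sbSet_measurable (sbGo ((a, b), (c, d)) [false]))
      rw [sbSet_union hInv, sbSet_inter hInv] at hkey
      have hatom : ν {((a : ℝ) + c) / ((b : ℝ) + d)} = 0 := by
        have hlo : loR (sb (w ++ [false])) = ((a : ℝ) + c) / ((b : ℝ) + d) := by
          rw [sb_snoc, hP, sbGo_false']
          unfold loR
          push_cast
          rfl
        rw [← hlo]
        exact atom_lo_zero hprob hsplit hα0 hα1 _ (by simp)
      rw [hatom, add_zero] at hkey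
      have hL : ν (sbSet (sbGo ((a, b), (c, d)) [true]))
          = fac α w.length true * ν (sbSet ((a, b), (c, d))) := by
        rw [← hP, ← sb_snoc]
        exact hT
      rw [hL] at hkey
      have hsum : ν (sbSet ((a, b), (c, d)))
          = fac α w.length true * ν (sbSet ((a, b), (c, d)))
            + fac α w.length false * ν (sbSet ((a, b), (c, d))) := by
        rw [← add_mul, fac_add_one hα0.le hα1, one_mul]
      nth_rewrite 1 [hsum] at hkey
      have hne : fac α w.length true * ν (sbSet ((a, b), (c, d))) ≠ ⊤ :=
        ENNReal.mul_ne_top (fac_ne_top _ _ _) (measure_ne_top ν _)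
      have := (ENNReal.add_right_inj hne).mp hkey
      rw [sb_snoc, hP]
      exact this.symm
  · -- true
    rcases Nat.eq_zero_or_pos w.length with hw | hw
    · have hwnil : w = [] := List.eq_nil_of_length_eq_zero hw
      subst hwnil
      rw [show ([] : List Bool) ++ [true] = [true] by rfl, sbSet_true', h01, sbSet_nil,
        nu_Ici_zero hprob hneg, mul_one]
      unfold fac
      norm_num
    · rw [hsplit w hw]
      congr 1

include hprob hneg h01 h1i hsplit hα0 hα1 in
lemma rel_one (w : List Bool) :
    ν (sbSet (sb (true :: w))) = ENNReal.ofReal ((1 - α) / α) * ν (sbSet (sb (false :: w))) := by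
  induction w using List.reverseRecOn with
  | nil =>
    rw [sbSet_true', sbSet_false', h01, h1i,
      ← ENNReal.ofReal_mul (div_nonneg (by linarith) hα0.le),
      div_mul_cancel₀ _ (ne_of_gt hα0)]
  | append_singleton w x ih =>
    have e1 : true :: (w ++ [x]) = (true :: w) ++ [x] := rfl
    have e2 : false :: (w ++ [x]) = (false :: w) ++ [x] := rfl
    rw [e1, e2, FACT hprob hneg h01 h1i hsplit hα0 hα1,
      FACT hprob hneg h01 h1i hsplit hα0 hα1]
    have hlen : (true :: w).length = (false :: w).length := rfl
    rw [hlen, ih]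
    ring

include hprob hneg h01 h1i hsplit hα0 hα1 in
lemma rel_two (w : List Bool) :
    ν (sbSet (sb (true :: w))) = ENNReal.ofReal (1 - α) * ν (sbSet (sb (w.map Bool.not))) := by
  induction w using List.reverseRecOn with
  | nil =>
    rw [sbSet_true', h01]
    simp only [List.map_nil]
    rw [sbSet_nil, nu_Ici_zero hprob hneg, mul_one]
  | append_singleton w x ih =>
    have e1 : true :: (w ++ [x]) = (true :: w) ++ [x] := rfl
    rw [e1, FACT hprob hneg h01 h1i hsplit hα0 hα1, List.map_append,
      show (List.map Bool.not [x]) = [!x] by rfl,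
      FACT hprob hneg h01 h1i hsplit hα0 hα1]
    have hlen : (true :: w).length = w.length + 1 := by simp
    have hlen2 : (w.map Bool.not).length = w.length := by simp
    rw [hlen, hlen2, fac_flip, ih]
    ring

include hprob hneg h01 h1i hsplit hα0 in
lemma atom_zero (hα1' : α < 1) (x : ℝ) : ν {x} = 0 := by
  rcases lt_or_ge x 0 with hx | hx
  · exact measure_mono_null (by simpa using hx) hneg
  · set M : ℝ := max α (1 - α) with hM
    have hM0 : 0 ≤ M := le_trans hα0.le (le_max_left _ _)
    have hM1 : M < 1 := max_lt hα1' (by linarith)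
    have hbound : ∀ n, ν (sbSet (sb (chain x n))) ≤ (ENNReal.ofReal M) ^ n := by
      intro n
      induction n with
      | zero =>
        haveI := hprob
        simpa using prob_le_one
      | succ n ih =>
        have hstep : chain x (n + 1)
            = chain x n ++ [if x ≤ medR (sb (chain x n)) then true else false] := rfl
        rw [hstep, FACT hprob hneg h01 h1i hsplit hα0 hα1'.le]
        calc fac α (chain x n).length _ * ν (sbSet (sb (chain x n)))
            ≤ ENNReal.ofReal M * (ENNReal.ofReal M) ^ n :=
              mul_le_mul' (fac_le _ _) ih
          _ = (ENNReal.ofReal M) ^ (n + 1) := by rw [pow_succ, mul_comm]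
    have hmem : ∀ n, ν {x} ≤ (ENNReal.ofReal M) ^ n := fun n =>
      le_trans (measure_mono (by simpa using chain_mem hx n)) (hbound n)
    have hlim : Tendsto (fun k => (ENNReal.ofReal M) ^ k) atTop (nhds 0) := by
      have h1 : Tendsto (fun k : ℕ => M ^ k) atTop (nhds 0) :=
        tendsto_pow_atTop_nhds_zero_of_lt_one hM0 hM1
      have h2 := ENNReal.tendsto_ofReal h1
      rw [ENNReal.ofReal_zero] at h2
      convert h2 using 2 with k
      rw [ENNReal.ofReal_pow hM0]
    exact le_zero_iff.mp (ge_of_tendsto' hlim hmem)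

end MeasureFacts

end SBCV

namespace SBCV

def Inv1 (I : (ℕ × ℕ) × (ℕ × ℕ)) : Prop := I.1.1 ≤ I.1.2 ∧ I.2.1 ≤ I.2.2

lemma inv1_step {a b c d : ℕ} (h : Inv1 ((a, b), (c, d))) (x : Bool) :
    Inv1 (sbGo ((a, b), (c, d)) [x]) := by
  have h1 : a ≤ b := h.1
  have h2 : c ≤ d := h.2
  cases x
  · rw [sbGo_false']
    exact ⟨show a + c ≤ b + d by omega, show c ≤ d from h2⟩
  · rw [sbGo_true']
    exact ⟨show a ≤ b from h1, show a + c ≤ b + d by omega⟩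

lemma inv1_sbGo {I : (ℕ × ℕ) × (ℕ × ℕ)} (h : Inv1 I) (w : List Bool) : Inv1 (sbGo I w) := by
  induction w generalizing I with
  | nil => exact h
  | cons x t ih =>
    obtain ⟨⟨a, b⟩, ⟨c, d⟩⟩ := I
    have h2 := inv1_step h x
    cases x
    · rw [sbGo_false'] at h2; rw [sbGo_false]; exact ih h2
    · rw [sbGo_true'] at h2; rw [sbGo_true]; exact ih h2

lemma a_lt_b {a b c d : ℕ} (hI : Inv ((a, b), (c, d))) (h1 : Inv1 ((a, b), (c, d))) :
    a < b := by
  have hdet : b * c = a * d + 1 := hI.2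
  have hab : a ≤ b := h1.1
  have hcd : c ≤ d := h1.2
  rcases Nat.lt_or_ge a b with h | h
  · exact h
  · exfalso
    have hab' : a = b := le_antisymm hab h
    subst hab'
    have : a * c ≤ a * d := Nat.mul_le_mul_left a hcd
    omega

/-- data for intervals inside [0,1]: descendants of ((0,1),(1,1)) -/
lemma inv_start01 : Inv ((0, 1), (1, 1)) := by constructor <;> simp
lemma inv1_start01 : Inv1 ((0, 1), (1, 1)) := by constructor <;> simp

lemma sb_true_eq (w : List Bool) : sb (true :: w) = sbGo ((0, 1), (1, 1)) w := by
  rw [sb_def, sbGo_true]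

lemma sb_false_eq (w : List Bool) : sb (false :: w) = sbGo ((1, 1), (1, 0)) w := by
  rw [sb_def, sbGo_false]

def psi (I : (ℕ × ℕ) × (ℕ × ℕ)) : (ℕ × ℕ) × (ℕ × ℕ) :=
  ((I.1.2, I.1.2 - I.1.1), (I.2.2, I.2.2 - I.2.1))

def phi (I : (ℕ × ℕ) × (ℕ × ℕ)) : (ℕ × ℕ) × (ℕ × ℕ) :=
  ((I.2.2 - I.2.1, I.2.1), (I.1.2 - I.1.1, I.1.1))

lemma psi_comm : ∀ (u : List Bool) (a b c d : ℕ), a ≤ b → c ≤ d →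
    sbGo ((b, b - a), (d, d - c)) u = psi (sbGo ((a, b), (c, d)) u) := by
  intro u
  induction u with
  | nil => intro a b c d _ _; rfl
  | cons x t ih =>
    intro a b c d hab hcd
    cases x
    · rw [sbGo_false, sbGo_false,
        show (b - a) + (d - c) = (b + d) - (a + c) by omega,
        show b + d = b + d from rfl]
      exact ih (a + c) (b + d) c d (by omega) hcd
    · rw [sbGo_true, sbGo_true,
        show (b - a) + (d - c) = (b + d) - (a + c) by omega]
      exact ih a b (a + c) (b + d) hab (by omega)

lemma phi_comm : ∀ (u : List Bool) (a b c d : ℕ), a ≤ b → c ≤ d →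
    sbGo ((d - c, c), (b - a, a)) (u.map Bool.not) = phi (sbGo ((a, b), (c, d)) u) := by
  intro u
  induction u with
  | nil => intro a b c d _ _; rfl
  | cons x t ih =>
    intro a b c d hab hcd
    cases x
    · rw [show ((false :: t).map Bool.not) = true :: t.map Bool.not from rfl,
        sbGo_true, sbGo_false,
        show (d - c) + (b - a) = (b + d) - (a + c) by omega,
        show c + a = a + c by omega]
      exact ih (a + c) (b + d) c d (by omega) hcd
    · rw [show ((true :: t).map Bool.not) = false :: t.map Bool.not from rfl,
        sbGo_false, sbGo_true,
        show (d - c) + (b - a) = (b + d) - (a + c) by omega,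
        show c + a = a + c by omega]
      exact ih a b (a + c) (b + d) hab (by omega)

lemma sb_false_psi (w : List Bool) : sb (false :: w) = psi (sb (true :: w)) := by
  rw [sb_false_eq, sb_true_eq]
  exact psi_comm w 0 1 1 1 (by omega) (by omega)

lemma sb_mapnot_phi (w : List Bool) : sb (w.map Bool.not) = phi (sb (true :: w)) := by
  rw [sb_def, sb_true_eq]
  exact phi_comm w 0 1 1 1 (by omega) (by omega)

/-- real helper lemmas -/
lemma rT1 {A B x : ℝ} (hA : 0 ≤ A) (hAB : A < B) (hx0 : 0 ≤ x) (hx1 : x < 1) :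
    B / (B - A) ≤ 1 / (1 - x) ↔ A / B ≤ x := by
  have hB : 0 < B := lt_of_le_of_lt hA hAB
  rw [div_le_div_iff₀ (by linarith) (by linarith), div_le_iff₀ hB]
  constructor <;> intro h <;> nlinarith

lemma rT2 {C D x : ℝ} (hC : 0 ≤ C) (hCD : C < D) (hx1 : x < 1) :
    1 / (1 - x) ≤ D / (D - C) ↔ x ≤ C / D := by
  have hD : 0 < D := lt_of_le_of_lt hC hCD
  rw [div_le_div_iff₀ (by linarith) (by linarith), le_div_iff₀ hD]
  constructor <;> intro h <;> nlinarith

lemma rS1 {C D x : ℝ} (hC : 0 < C) (hCD : C ≤ D) (hx : 0 < x) :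
    (D - C) / C ≤ (1 - x) / x ↔ x ≤ C / D := by
  have hD : 0 < D := lt_of_lt_of_le hC hCD
  rw [div_le_div_iff₀ hC hx, le_div_iff₀ hD]
  constructor <;> intro h <;> nlinarith

lemma rS2 {A B x : ℝ} (hA : 0 < A) (hAB : A < B) (hx : 0 < x) :
    (1 - x) / x ≤ (B - A) / A ↔ A / B ≤ x := by
  have hB : 0 < B := lt_trans hA hAB
  rw [div_le_div_iff₀ hx hA, div_le_iff₀ hB]
  constructor <;> intro h <;> nlinarith

lemma T_mem {a b c d : ℕ} (hI : Inv ((a, b), (c, d))) (h1 : Inv1 ((a, b), (c, d)))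
    (hd : 1 ≤ d) {x : ℝ} (hx0 : 0 ≤ x) (hx1 : x < 1) :
    1 / (1 - x) ∈ sbSet (psi ((a, b), (c, d))) ↔ x ∈ sbSet ((a, b), (c, d)) := by
  have hab : a < b := a_lt_b hI h1
  have hc : 1 ≤ c := hI.c_pos
  have hcd : c ≤ d := h1.2
  have hcb : ((b - a : ℕ) : ℝ) = (b : ℝ) - (a : ℝ) := by
    rw [Nat.cast_sub hab.le]
  have hA : (0 : ℝ) ≤ a := Nat.cast_nonneg a
  have hAB : (a : ℝ) < b := by exact_mod_cast hab
  have hC : (0 : ℝ) ≤ c := Nat.cast_nonneg c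
  rw [sbSet_eq_Icc _ _ _ hd]
  rcases Nat.lt_or_ge c d with hlt | hge
  · -- c < d
    have hdc : ((d - c : ℕ) : ℝ) = (d : ℝ) - (c : ℝ) := by
      rw [Nat.cast_sub hcd]
    have hCD : (c : ℝ) < d := by exact_mod_cast hlt
    have hpsi : sbSet (psi ((a, b), (c, d)))
        = Set.Icc ((b : ℝ) / ((b : ℝ) - a)) ((d : ℝ) / ((d : ℝ) - c)) := by
      show sbSet ((b, b - a), (d, d - c)) = _
      rw [sbSet_eq_Icc _ _ _ (by omega), hcb, hdc]
    rw [hpsi]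
    simp only [Set.mem_Icc]
    rw [rT1 hA hAB hx0 hx1, rT2 hC hCD hx1]
  · -- c = d
    have hcd' : c = d := le_antisymm hcd hge
    subst hcd'
    have hpsi : sbSet (psi ((a, b), (c, c)))
        = Set.Ici ((b : ℝ) / ((b : ℝ) - a)) := by
      show sbSet ((b, b - a), (c, c - c)) = _
      rw [show c - c = 0 by omega, sbSet_eq_Ici, hcb]
    rw [hpsi]
    simp only [Set.mem_Ici, Set.mem_Icc]
    rw [rT1 hA hAB hx0 hx1]
    have hcc : (c : ℝ) / c = 1 := by
      rw [div_self (by exact_mod_cast (by omega : c ≠ 0))]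
    rw [hcc]
    constructor
    · intro h; exact ⟨h, hx1.le⟩
    · intro h; exact h.1

lemma S_mem {a b c d : ℕ} (hI : Inv ((a, b), (c, d))) (h1 : Inv1 ((a, b), (c, d)))
    (hd : 1 ≤ d) {x : ℝ} (hx0 : 0 < x) (hx1 : x ≤ 1) :
    (1 - x) / x ∈ sbSet (phi ((a, b), (c, d))) ↔ x ∈ sbSet ((a, b), (c, d)) := by
  have hab : a < b := a_lt_b hI h1
  have hc : 1 ≤ c := hI.c_pos
  have hcd : c ≤ d := h1.2
  have hdc : ((d - c : ℕ) : ℝ) = (d : ℝ) - (c : ℝ) := by rw [Nat.cast_sub hcd]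
  have hC : (0 : ℝ) < c := by exact_mod_cast hc
  have hCD : (c : ℝ) ≤ d := by exact_mod_cast hcd
  have hD : (0 : ℝ) < d := by exact_mod_cast hd
  rw [sbSet_eq_Icc _ _ _ hd]
  rcases Nat.eq_zero_or_pos a with ha | ha
  · subst ha
    have hphi : sbSet (phi ((0, b), (c, d)))
        = Set.Ici (((d : ℝ) - c) / (c : ℝ)) := by
      show sbSet ((d - c, c), (b - 0, 0)) = _
      rw [sbSet_eq_Ici, hdc]
    rw [hphi]
    simp only [Set.mem_Ici, Set.mem_Icc]
    rw [rS1 hC hCD hx0]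
    constructor
    · intro h
      refine ⟨?_, h⟩
      rw [Nat.cast_zero, zero_div]
      exact hx0.le
    · intro h; exact h.2
  · have hA : (0 : ℝ) < a := by exact_mod_cast ha
    have hAB : (a : ℝ) < b := by exact_mod_cast hab
    have hba : ((b - a : ℕ) : ℝ) = (b : ℝ) - (a : ℝ) := by rw [Nat.cast_sub hab.le]
    have hphi : sbSet (phi ((a, b), (c, d)))
        = Set.Icc (((d : ℝ) - c) / (c : ℝ)) (((b : ℝ) - a) / (a : ℝ)) := by
      show sbSet ((d - c, c), (b - a, a)) = _
      rw [sbSet_eq_Icc _ _ _ ha, hdc, hba]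
    rw [hphi]
    simp only [Set.mem_Icc]
    rw [rS1 hC hCD hx0, rS2 hA hAB hx0]
    exact and_comm

end SBCV

namespace SBCV

open scoped ENNReal

section Main

variable {α : ℝ} {ν : Measure ℝ}
variable (hprob : IsProbabilityMeasure ν)
variable (hneg : ν (Set.Iio 0) = 0)
variable (h01 : ν (Set.Icc 0 1) = ENNReal.ofReal (1 - α))
variable (h1i : ν (Set.Ici 1) = ENNReal.ofReal α)
variable (hsplit : ∀ w : List Bool, 1 ≤ w.length →
    ν (sbSet (sb (w ++ [true]))) =
      (if Odd w.length then ENNReal.ofReal α else ENNReal.ofReal (1 - α)) * ν (sbSet (sb w)))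
variable (hα0 : 0 < α) (hα1' : α < 1)

lemma hT_meas : Measurable (fun x : ℝ => 1 / (1 - x)) := by
  simp_rw [one_div]
  exact (measurable_const.sub measurable_id).inv

lemma map_not_not (w : List Bool) : (w.map Bool.not).map Bool.not = w := by
  induction w with
  | nil => rfl
  | cons x t ih => cases x <;> simp [ih]

lemma hS_meas : Measurable (fun x : ℝ => (1 - x) / x) :=
  (measurable_const.sub measurable_id).div measurable_id

/-- the interval data of `sb (true :: w)` -/
lemma true_cons_data (w : List Bool) :
    ∃ a b c d : ℕ, sb (true :: w) = ((a, b), (c, d)) ∧ Inv ((a, b), (c, d)) ∧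
      Inv1 ((a, b), (c, d)) ∧ 1 ≤ d := by
  rcases hQ : sb (true :: w) with ⟨⟨a, b⟩, ⟨c, d⟩⟩
  have hQ2 : sbGo ((0, 1), (1, 1)) w = ((a, b), (c, d)) := by rw [← sb_true_eq]; exact hQ
  have hI : Inv ((a, b), (c, d)) := hQ2 ▸ inv_sbGo inv_start01 w
  have hI1 : Inv1 ((a, b), (c, d)) := hQ2 ▸ inv1_sbGo inv1_start01 w
  have hd : 1 ≤ d := le_trans hI.c_pos hI1.2
  exact ⟨a, b, c, d, rfl, hI, hI1, hd⟩

lemma true_cons_subset (w : List Bool) : sbSet (sb (true :: w)) ⊆ Set.Icc 0 1 := by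
  have h := sbSet_append_subset [true] w
  rw [show [true] ++ w = true :: w from rfl, sbSet_true'] at h
  exact h

lemma false_cons_subset (w : List Bool) : sbSet (sb (false :: w)) ⊆ Set.Ici 1 := by
  have h := sbSet_append_subset [false] w
  rw [show [false] ++ w = false :: w from rfl, sbSet_false'] at h
  exact h

include hprob hneg h01 h1i hsplit hα0 hα1' in
theorem part_one :
    Measure.map (fun x : ℝ => 1 / (1 - x)) (ν.restrict (Set.Ico 0 1)) =
      ENNReal.ofReal ((1 - α) / α) • ν.restrict (Set.Ici 1) := by
  haveI := hprob
  have hatom := atom_zero hprob hneg h01 h1i hsplit hα0 hα1'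
  set T : ℝ → ℝ := fun x : ℝ => 1 / (1 - x) with hT
  set c : ℝ≥0∞ := ENNReal.ofReal ((1 - α) / α) with hc
  have hTb : ∀ x : ℝ, x ∈ Set.Ico (0 : ℝ) 1 → 1 ≤ T x := by
    rintro x ⟨hx0, hx1⟩
    have h1x : 0 < 1 - x := by linarith
    show (1 : ℝ) ≤ 1 / (1 - x)
    rw [le_div_iff₀ h1x]
    linarith
  have happ1 : ∀ s : Set ℝ, MeasurableSet s →
      Measure.map T (ν.restrict (Set.Ico 0 1)) s = ν (T ⁻¹' s ∩ Set.Ico 0 1) := by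
    intro s hs
    rw [Measure.map_apply hT_meas hs, Measure.restrict_apply (hT_meas hs)]
  have happ2 : ∀ s : Set ℝ, MeasurableSet s →
      (c • ν.restrict (Set.Ici 1)) s = c * ν (s ∩ Set.Ici 1) := by
    intro s hs
    rw [Measure.smul_apply, smul_eq_mul, Measure.restrict_apply hs]
  haveI : IsFiniteMeasure (Measure.map T (ν.restrict (Set.Ico 0 1))) := by
    constructor
    rw [happ1 _ MeasurableSet.univ]
    exact lt_of_le_of_lt (measure_mono (Set.subset_univ _)) (measure_lt_top ν _)
  haveI : IsFiniteMeasure (c • ν.restrict (Set.Ici 1)) := by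
    constructor
    rw [happ2 _ MeasurableSet.univ]
    exact ENNReal.mul_lt_top ENNReal.ofReal_lt_top
      (lt_of_le_of_lt (measure_mono (Set.subset_univ _)) (measure_lt_top ν _))
  apply ext_meas
  · -- agreement on Stern-Brocot sets
    intro w
    rw [happ1 _ (sbSet_measurable _), happ2 _ (sbSet_measurable _)]
    cases w with
    | nil =>
      rw [sbSet_nil]
      have hpre : T ⁻¹' Set.Ici 0 ∩ Set.Ico 0 1 = Set.Ico 0 1 := by
        apply Set.inter_eq_self_of_subset_right
        intro x hx
        exact le_trans zero_le_one (hTb x hx)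
      rw [hpre, Set.Ici_inter_Ici, max_eq_right (zero_le_one), h1i,
        ← Set.Icc_sdiff_right, measure_diff_null (hatom 1), h01, hc,
        ← ENNReal.ofReal_mul (div_nonneg (by linarith) hα0.le),
        div_mul_cancel₀ _ (ne_of_gt hα0)]
    | cons x w' =>
      cases x
      · -- w = false :: w'
        have hset : T ⁻¹' (sbSet (sb (false :: w'))) ∩ Set.Ico 0 1
            = sbSet (sb (true :: w')) ∩ Set.Ico 0 1 := by
          obtain ⟨a, b, c', d, hQ, hI, hI1, hd⟩ := true_cons_data w'
          rw [sb_false_psi, hQ]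
          ext x
          simp only [Set.mem_inter_iff, Set.mem_preimage]
          constructor
          · rintro ⟨h1, h2⟩
            exact ⟨(T_mem hI hI1 hd h2.1 h2.2).mp h1, h2⟩
          · rintro ⟨h1, h2⟩
            exact ⟨(T_mem hI hI1 hd h2.1 h2.2).mpr h1, h2⟩
        rw [hset]
        have hB : sbSet (sb (true :: w')) ∩ Set.Ico 0 1 = sbSet (sb (true :: w')) \ {1} := by
          ext x
          simp only [Set.mem_inter_iff, Set.mem_diff, Set.mem_singleton_iff, Set.mem_Ico]
          constructor
          · rintro ⟨h1, h2, h3⟩; exact ⟨h1, by intro h; rw [h] at h3; linarith⟩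
          · rintro ⟨h1, h2⟩
            have := true_cons_subset w' h1
            exact ⟨h1, this.1, lt_of_le_of_ne this.2 h2⟩
        rw [hB, measure_diff_null (hatom 1),
          rel_one hprob hneg h01 h1i hsplit hα0 hα1'.le w',
          Set.inter_eq_self_of_subset_left (false_cons_subset w')]
      · -- w = true :: w'
        have hz1 : ν (sbSet (sb (true :: w')) ∩ Set.Ici 1) = 0 := by
          apply measure_mono_null _ (hatom 1)
          rintro x ⟨h1, h2⟩
          exact le_antisymm ((true_cons_subset w' h1).2) h2
        have hz2 : T ⁻¹' (sbSet (sb (true :: w'))) ∩ Set.Ico 0 1 ⊆ {0} := by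
          rintro x ⟨h1, h2⟩
          have hTx1 : T x ≤ 1 := (true_cons_subset w' h1).2
          have hTx2 : 1 ≤ T x := hTb x h2
          have h1x : 0 < 1 - x := by
            rcases h2 with ⟨hx0, hx1⟩; linarith
          have hTx : (1 : ℝ) / (1 - x) = 1 := le_antisymm hTx1 hTx2
          rw [div_eq_iff (ne_of_gt h1x), one_mul] at hTx
          have : x = 0 := by linarith
          simp [this]
        rw [measure_mono_null hz2 (hatom 0), hz1, mul_zero]
  · -- singletons of the pushforward
    intro y
    rw [happ1 _ (measurableSet_singleton y)]
    apply measure_mono_null _ (hatom (1 - 1 / y))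
    rintro x ⟨h1, h2⟩
    simp only [Set.mem_preimage, Set.mem_singleton_iff] at h1
    have h1' : 1 / (1 - x) = y := h1
    have : 1 - 1 / y = x := by rw [← h1', one_div_one_div]; ring
    simp [← this]
  · -- singletons of the scaled restriction
    intro y
    rw [happ2 _ (measurableSet_singleton y),
      measure_mono_null Set.inter_subset_left (hatom y), mul_zero]
  · -- negatives, pushforward
    rw [happ1 _ measurableSet_Iio]
    convert measure_empty (μ := ν)
    · ext x
      simp only [Set.mem_inter_iff, Set.mem_preimage, Set.mem_Iio, Set.mem_empty_iff_false,
        iff_false, not_and]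
      intro h hx
      have := hTb x hx
      linarith
  · -- negatives, scaled restriction
    rw [happ2 _ measurableSet_Iio]
    convert mul_zero c
    apply measure_mono_null _ (hatom 1)
    rintro x ⟨h1, h2⟩
    exact absurd (lt_of_le_of_lt (le_trans zero_le_one h2) (Set.mem_Iio.mp h1)) (by norm_num)

include hprob hneg h01 h1i hsplit hα0 hα1' in
theorem part_two :
    Measure.map (fun x : ℝ => (1 - x) / x) (ν.restrict (Set.Ioc 0 1)) =
      ENNReal.ofReal (1 - α) • ν := by
  haveI := hprob
  have hatom := atom_zero hprob hneg h01 h1i hsplit hα0 hα1'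
  set S : ℝ → ℝ := fun x : ℝ => (1 - x) / x with hS
  set c : ℝ≥0∞ := ENNReal.ofReal (1 - α) with hc
  have hSb : ∀ x : ℝ, x ∈ Set.Ioc (0 : ℝ) 1 → 0 ≤ S x := by
    rintro x ⟨hx0, hx1⟩
    exact div_nonneg (by linarith) hx0.le
  have happ1 : ∀ s : Set ℝ, MeasurableSet s →
      Measure.map S (ν.restrict (Set.Ioc 0 1)) s = ν (S ⁻¹' s ∩ Set.Ioc 0 1) := by
    intro s hs
    rw [Measure.map_apply hS_meas hs, Measure.restrict_apply (hS_meas hs)]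
  have happ2 : ∀ s : Set ℝ, (c • ν) s = c * ν s := by
    intro s
    rw [Measure.smul_apply, smul_eq_mul]
  haveI : IsFiniteMeasure (Measure.map S (ν.restrict (Set.Ioc 0 1))) := by
    constructor
    rw [happ1 _ MeasurableSet.univ]
    exact lt_of_le_of_lt (measure_mono (Set.subset_univ _)) (measure_lt_top ν _)
  haveI : IsFiniteMeasure (c • ν) := by
    constructor
    rw [happ2]
    exact ENNReal.mul_lt_top ENNReal.ofReal_lt_top
      (lt_of_le_of_lt (measure_mono (Set.subset_univ _)) (measure_lt_top ν _))
  apply ext_meas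
  · intro w
    rw [happ1 _ (sbSet_measurable _), happ2]
    have hset : S ⁻¹' (sbSet (sb w)) ∩ Set.Ioc 0 1
        = sbSet (sb (true :: w.map Bool.not)) ∩ Set.Ioc 0 1 := by
      obtain ⟨a, b, c', d, hQ, hI, hI1, hd⟩ := true_cons_data (w.map Bool.not)
      have hw : sb w = phi ((a, b), (c', d)) := by
        rw [← hQ, ← sb_mapnot_phi, map_not_not]
      rw [hw, hQ]
      ext x
      simp only [Set.mem_inter_iff, Set.mem_preimage]
      constructor
      · rintro ⟨h1, h2⟩
        exact ⟨(S_mem hI hI1 hd h2.1 h2.2).mp h1, h2⟩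
      · rintro ⟨h1, h2⟩
        exact ⟨(S_mem hI hI1 hd h2.1 h2.2).mpr h1, h2⟩
    rw [hset]
    have hB : sbSet (sb (true :: w.map Bool.not)) ∩ Set.Ioc 0 1
        = sbSet (sb (true :: w.map Bool.not)) \ {0} := by
      ext x
      simp only [Set.mem_inter_iff, Set.mem_diff, Set.mem_singleton_iff, Set.mem_Ioc]
      constructor
      · rintro ⟨h1, h2, h3⟩; exact ⟨h1, by intro h; rw [h] at h2; linarith⟩
      · rintro ⟨h1, h2⟩
        have := true_cons_subset _ h1
        exact ⟨h1, lt_of_le_of_ne this.1 (Ne.symm h2), this.2⟩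
    rw [hB, measure_diff_null (hatom 0),
      rel_two hprob hneg h01 h1i hsplit hα0 hα1'.le (w.map Bool.not), map_not_not]
  · intro y
    rw [happ1 _ (measurableSet_singleton y)]
    apply measure_mono_null _ (hatom (1 / (y + 1)))
    rintro x ⟨h1, h2⟩
    simp only [Set.mem_preimage, Set.mem_singleton_iff] at h1
    have hx0 : 0 < x := h2.1
    have h1' : (1 - x) / x = y := h1
    rw [div_eq_iff (ne_of_gt hx0)] at h1'
    have hxy : (y + 1) * x = 1 := by nlinarith [h1']
    have hy1 : y + 1 ≠ 0 := by
      intro h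
      rw [h, zero_mul] at hxy
      norm_num at hxy
    have : x = 1 / (y + 1) := by
      rw [eq_div_iff hy1]
      nlinarith [hxy]
    simp [this]
  · intro y
    rw [happ2, measure_mono_null (le_refl _) (hatom y), mul_zero]
  · rw [happ1 _ measurableSet_Iio]
    convert measure_empty (μ := ν)
    · ext x
      simp only [Set.mem_inter_iff, Set.mem_preimage, Set.mem_Iio, Set.mem_empty_iff_false,
        iff_false, not_and]
      intro h hx
      have := hSb x hx
      linarith
  · rw [happ2, hneg, mul_zero]

end Main

end SBCV

/-- Changes of variables for `ν_α` (`0 < α ≤ 1`): the pushforward of `ν_α` restricted to `[0,1)`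
under `x ↦ 1/(1-x)` is `((1-α)/α)` times `ν_α` restricted to `[1,∞)`, and the pushforward of
`ν_α` restricted to `(0,1]` under `x ↦ (1-x)/x` is `(1-α)·ν_α`; consequently the corresponding
change-of-variables formulas hold for every `ν_α`-integrable function. -/
theorem sternBrocotMeasure_change_of_variables
    (α : ℝ) (hα0 : 0 < α) (hα1 : α ≤ 1) (ν : Measure ℝ)
    (hν : IsSternBrocotMeasure α ν) :
    Measure.map (fun x : ℝ => 1 / (1 - x)) (ν.restrict (Set.Ico 0 1)) =
      ENNReal.ofReal ((1 - α) / α) • ν.restrict (Set.Ici 1) ∧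
    Measure.map (fun x : ℝ => (1 - x) / x) (ν.restrict (Set.Ioc 0 1)) =
      ENNReal.ofReal (1 - α) • ν ∧
    ∀ f : ℝ → ℝ, Integrable f ν →
      (∫ x in Set.Ico (0 : ℝ) 1, f (1 / (1 - x)) ∂ν =
        ((1 - α) / α) * ∫ x in Set.Ici (1 : ℝ), f x ∂ν) ∧
      (∫ x in Set.Ioc (0 : ℝ) 1, f ((1 - x) / x) ∂ν =
        (1 - α) * ∫ x in Set.Ici (0 : ℝ), f x ∂ν) := by
  obtain ⟨hprob, hneg, h01, h1i, hsplit⟩ := hν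
  haveI := hprob
  rcases eq_or_lt_of_le hα1 with heq | hlt
  · -- the degenerate case α = 1
    subst heq
    have h0 : ν (Set.Icc 0 1) = 0 := by rw [h01]; norm_num
    have hIco : ν (Set.Ico 0 1) = 0 := measure_mono_null Set.Ico_subset_Icc_self h0
    have hIoc : ν (Set.Ioc 0 1) = 0 := measure_mono_null Set.Ioc_subset_Icc_self h0
    have hr1 : ν.restrict (Set.Ico 0 1) = 0 := Measure.restrict_eq_zero.mpr hIco
    have hr2 : ν.restrict (Set.Ioc 0 1) = 0 := Measure.restrict_eq_zero.mpr hIoc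
    refine ⟨?_, ?_, ?_⟩
    · rw [hr1, Measure.map_zero, show ((1 : ℝ) - 1) / 1 = 0 by norm_num,
        ENNReal.ofReal_zero, zero_smul]
    · rw [hr2, Measure.map_zero, show ((1 : ℝ) - 1) = 0 by norm_num,
        ENNReal.ofReal_zero, zero_smul]
    · intro f hf
      constructor
      · rw [hr1, integral_zero_measure, show ((1 : ℝ) - 1) / 1 = 0 by norm_num, zero_mul]
      · rw [hr2, integral_zero_measure, show ((1 : ℝ) - 1) = 0 by norm_num, zero_mul]
  · -- the main case α < 1
    have hp1 := SBCV.part_one hprob hneg h01 h1i hsplit hα0 hlt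
    have hp2 := SBCV.part_two hprob hneg h01 h1i hsplit hα0 hlt
    refine ⟨hp1, hp2, ?_⟩
    intro f hf
    have hfae : AEStronglyMeasurable f ν := hf.1
    have hac1 : (ENNReal.ofReal ((1 - α) / α) • ν.restrict (Set.Ici 1)) ≪ ν := by
      intro s hs
      rw [Measure.smul_apply, smul_eq_mul]
      have hle := Measure.le_iff'.mp (Measure.restrict_le_self (μ := ν) (s := Set.Ici 1)) s
      rw [hs] at hle
      rw [le_antisymm hle zero_le, mul_zero]
    have hac2 : (ENNReal.ofReal (1 - α) • ν) ≪ ν := by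
      intro s hs
      rw [Measure.smul_apply, smul_eq_mul, hs, mul_zero]
    have hfm1 : AEStronglyMeasurable f
        (Measure.map (fun x : ℝ => 1 / (1 - x)) (ν.restrict (Set.Ico 0 1))) := by
      rw [hp1]; exact hfae.mono_ac hac1
    have hfm2 : AEStronglyMeasurable f
        (Measure.map (fun x : ℝ => (1 - x) / x) (ν.restrict (Set.Ioc 0 1))) := by
      rw [hp2]; exact hfae.mono_ac hac2
    have hres : ν.restrict (Set.Ici 0) = ν := by
      apply Measure.restrict_eq_self_of_ae_mem
      have hset : {a : ℝ | ¬ a ∈ Set.Ici (0 : ℝ)} = Set.Iio 0 := by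
        ext a; simp [not_le]
      rw [Filter.eventually_iff]
      apply Filter.mem_of_superset _ (fun a (ha : a ∈ Set.Ici (0:ℝ)) => ha)
      rw [MeasureTheory.mem_ae_iff]
      rw [show (Set.Ici (0:ℝ))ᶜ = Set.Iio 0 from by ext a; simp [not_le]]
      exact hneg
    constructor
    · calc ∫ x in Set.Ico (0 : ℝ) 1, f (1 / (1 - x)) ∂ν
          = ∫ y, f y ∂(Measure.map (fun x : ℝ => 1 / (1 - x)) (ν.restrict (Set.Ico 0 1))) := by
            rw [integral_map SBCV.hT_meas.aemeasurable hfm1]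
        _ = ∫ y, f y ∂(ENNReal.ofReal ((1 - α) / α) • ν.restrict (Set.Ici 1)) := by rw [hp1]
        _ = ((1 - α) / α) * ∫ x in Set.Ici (1 : ℝ), f x ∂ν := by
            rw [integral_smul_measure,
              ENNReal.toReal_ofReal (div_nonneg (by linarith) hα0.le), smul_eq_mul]
    · calc ∫ x in Set.Ioc (0 : ℝ) 1, f ((1 - x) / x) ∂ν
          = ∫ y, f y ∂(Measure.map (fun x : ℝ => (1 - x) / x) (ν.restrict (Set.Ioc 0 1))) := by
            rw [integral_map SBCV.hS_meas.aemeasurable hfm2]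
        _ = ∫ y, f y ∂(ENNReal.ofReal (1 - α) • ν) := by rw [hp2]
        _ = (1 - α) * ∫ x in Set.Ici (0 : ℝ), f x ∂ν := by
            rw [integral_smul_measure, ENNReal.toReal_ofReal (by linarith : (0:ℝ) ≤ 1 - α),
              smul_eq_mul, hres]
end
end
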